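/- arXiv:1511.00199 — 11 statements merged into one kernel-verified Lean document; each statement's English description precedes it below -/
import Mathlib

section
/- Generalized Laplace expansion along the first k rows: let R be a commutative ring, n ≥ 1, k ≤ n, and M an n×n matrix over R. Then det M = Σ_S (−1)^{σ(S)+k(k+1)/2} · det(M[{1,…,k}, S]) · det(M[{k+1,…,n}, Sᶜ]), where S runs over all k-element subsets of the column index set {1,…,n}, σ(S) denotes the sum of the (1-indexed) positions of the elements of S, M[I,J] is the square submatrix of M with rows I and columns J each taken in increasing order, and Sᶜ is the complement of S in {1,…,n}. -/
open Finset Equiv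

private lemma orderEmb_swap {n m : ℕ} (T T₂ : Finset (Fin n)) (h : T.card = m)
    (a b : Fin n) (ha : a ∈ T) (hb : b ∉ T)
    (hT2 : T₂ = insert b (T.erase a))
    (hcomp : ∀ t ∈ T, t ≠ a → (t < a ↔ t < b))
    (h' : T₂.card = m) (i : Fin m) :
    T₂.orderEmbOfFin h' i = Equiv.swap a b (T.orderEmbOfFin h i) := by
  subst hT2
  have hab : a ≠ b := fun e => hb (e ▸ ha)
  have key : (fun i => Equiv.swap a b (T.orderEmbOfFin h i))
      = ⇑((insert b (T.erase a)).orderEmbOfFin h') := by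
    apply Finset.orderEmbOfFin_unique
    · intro x
      have hx : T.orderEmbOfFin h x ∈ T := Finset.orderEmbOfFin_mem T h x
      rcases eq_or_ne (T.orderEmbOfFin h x) a with he | he
      · rw [he, Equiv.swap_apply_left]; exact Finset.mem_insert_self _ _
      · rw [Equiv.swap_apply_of_ne_of_ne he (fun e => hb (by rw [← e]; exact hx))]
        exact Finset.mem_insert_of_mem (Finset.mem_erase.2 ⟨he, hx⟩)
    · intro x y hxy
      have hm : T.orderEmbOfFin h x < T.orderEmbOfFin h y :=
        (T.orderEmbOfFin h).strictMono hxy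
      set u := T.orderEmbOfFin h x with hu_def
      set v := T.orderEmbOfFin h y with hv_def
      have hu : u ∈ T := Finset.orderEmbOfFin_mem T h x
      have hv : v ∈ T := Finset.orderEmbOfFin_mem T h y
      show Equiv.swap a b u < Equiv.swap a b v
      have hub : u ≠ b := fun e => hb (e ▸ hu)
      have hvb : v ≠ b := fun e => hb (e ▸ hv)
      rcases eq_or_ne u a with hu' | hu' <;> rcases eq_or_ne v a with hv' | hv'
      · exact absurd (hu' ▸ hv' ▸ hm) (lt_irrefl _)
      · rw [hu', Equiv.swap_apply_left, Equiv.swap_apply_of_ne_of_ne hv' hvb]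
        have : ¬ v < a := not_lt.2 (le_of_lt (hu' ▸ hm))
        have : ¬ v < b := fun hh => this ((hcomp v hv hv').2 hh)
        exact lt_of_le_of_ne (not_lt.1 this) (Ne.symm hvb)
      · rw [hv', Equiv.swap_apply_left, Equiv.swap_apply_of_ne_of_ne hu' hub]
        exact (hcomp u hu hu').1 (hv' ▸ hm)
      · rw [Equiv.swap_apply_of_ne_of_ne hu' hub, Equiv.swap_apply_of_ne_of_ne hv' hvb]
        exact hm
  exact (congrFun key i).symm

variable {n k : ℕ}

private def e0 (hk : k ≤ n) : Fin k ⊕ Fin (n - k) ≃ Fin n :=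
  finSumFinEquiv.trans (finCongr (Nat.add_sub_cancel' hk))

private lemma e0_inl (hk : k ≤ n) (i : Fin k) : e0 hk (Sum.inl i) = Fin.castLE hk i := by
  simp [e0]
  apply Fin.ext
  simp

private lemma e0_inr (hk : k ≤ n) (i : Fin (n - k)) :
    e0 hk (Sum.inr i) = Fin.cast (Nat.add_sub_cancel' hk) (Fin.natAdd k i) := by
  simp [e0]

private lemma compl_card {S : Finset (Fin n)} (hS : S.card = k) : Sᶜ.card = n - k := by
  simp [Finset.card_compl, hS]

private def eS (hk : k ≤ n) (S : Finset (Fin n)) (hS : S.card = k) :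
    Fin k ⊕ Fin (n - k) ≃ Fin n :=
  finSumEquivOfFinset hS (compl_card hS)

private def rho (hk : k ≤ n) (S : Finset (Fin n)) (hS : S.card = k) : Equiv.Perm (Fin n) :=
  (e0 hk).symm.trans (eS hk S hS)

private lemma rho_apply (hk : k ≤ n) (S : Finset (Fin n)) (hS : S.card = k)
    (x : Fin k ⊕ Fin (n - k)) : rho hk S hS (e0 hk x) = eS hk S hS x := by
  simp [rho]

private lemma sign_rho_aux (hk : k ≤ n) (N : ℕ) :
    ∀ (S : Finset (Fin n)) (hS : S.card = k), (∑ j ∈ S, (j : ℕ)) = N →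
      Equiv.Perm.sign (rho hk S hS) = (-1) ^ (N + k * (k - 1) / 2) := by
  induction N using Nat.strong_induction_on with
  | _ N IH =>
    intro S hS hN
    by_cases hbase : ∀ j ∈ S, (j : ℕ) < k
    · -- base case : S = image of Fin k
      have hSB : S = Finset.univ.map (Fin.castLEEmb hk) := by
        apply Finset.eq_of_subset_of_card_le
        · intro j hj
          simp only [Finset.mem_map, Finset.mem_univ, true_and]
          exact ⟨⟨(j : ℕ), hbase j hj⟩, Fin.ext rfl⟩
        · rw [Finset.card_map, Finset.card_univ, Fintype.card_fin, hS]
      subst hSB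
      have hNval : N = k * (k - 1) / 2 := by
        rw [← hN, Finset.sum_map]
        have : ∀ i : Fin k, ((Fin.castLEEmb hk i : Fin n) : ℕ) = (i : ℕ) := fun i => rfl
        simp only [this]
        rw [Fin.sum_univ_eq_sum_range (fun i => i) k, Finset.sum_range_id]
      -- rho = refl
      have hrho : rho hk _ hS = Equiv.refl (Fin n) := by
        apply Equiv.ext
        intro j
        obtain ⟨x, rfl⟩ := (e0 hk).surjective j
        rw [Equiv.refl_apply, rho_apply]
        cases x with
        | inl i =>
          rw [e0_inl]
          show (Finset.univ.map (Fin.castLEEmb hk)).orderEmbOfFin hS i = _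
          have := Finset.orderEmbOfFin_unique hS
            (f := fun i : Fin k => Fin.castLE hk i) ?_ ?_
          · exact (congrFun this i).symm
          · intro x
            simp only [Finset.mem_map, Finset.mem_univ, true_and]
            exact ⟨x, rfl⟩
          · intro x y hxy
            simp only [Fin.lt_def, Fin.coe_castLE]
            exact hxy
        | inr i =>
          rw [e0_inr]
          show ((Finset.univ.map (Fin.castLEEmb hk))ᶜ).orderEmbOfFin (compl_card hS) i = _
          have := Finset.orderEmbOfFin_unique (compl_card hS)
            (f := fun i : Fin (n - k) =>
              Fin.cast (Nat.add_sub_cancel' hk) (Fin.natAdd k i)) ?_ ?_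
          · exact (congrFun this i).symm
          · intro x
            simp only [Finset.mem_compl, Finset.mem_map, Finset.mem_univ, true_and, not_exists]
            intro y hy
            have : (y : ℕ) = k + (x : ℕ) := by
              have := congrArg Fin.val hy
              simpa using this
            omega
          · intro x y hxy
            simp only [Fin.lt_def, Fin.coe_cast, Fin.coe_natAdd]
            exact Nat.add_lt_add_left hxy k
      rw [hrho, hNval]
      rw [Equiv.Perm.sign_refl]
      rw [← two_mul, pow_mul]
      norm_num
    · -- step case
      push_neg at hbase
      obtain ⟨j₀, hj₀S, hj₀k⟩ := hbase
      have hkpos : 0 < k := by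
        rw [← hS]; exact Finset.card_pos.2 ⟨j₀, hj₀S⟩
      -- find s ∈ S with predecessor t ∉ S
      have hex : ∃ s t : Fin n, s ∈ S ∧ t ∉ S ∧ (t : ℕ) + 1 = (s : ℕ) := by
        by_contra hno
        push_neg at hno
        have dc : ∀ (d : ℕ) (s : Fin n), s ∈ S → ∀ (u : Fin n), (u : ℕ) + d = (s : ℕ) → u ∈ S := by
          intro d
          induction d with
          | zero =>
            intro s hs u hu
            have : u = s := Fin.ext (by omega)
            rwa [this]
          | succ d ih =>
            intro s hs u hu
            have htn : (u : ℕ) + d < n := by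
              have := s.isLt; omega
            set t : Fin n := ⟨(u : ℕ) + d, htn⟩ with ht_def
            have ht : t ∈ S := by
              by_contra htS
              refine (hno s t hs htS) ?_
              show (u : ℕ) + d + 1 = (s : ℕ)
              omega
            exact ih t ht u rfl
        have hsub : (j₀ : ℕ) + 1 ≤ k := by
          have hle := Finset.card_le_card_of_injOn
            (f := fun i : Fin ((j₀ : ℕ) + 1) => (⟨(i : ℕ), lt_of_le_of_lt (Fin.is_le i) j₀.isLt⟩ : Fin n))
            (s := Finset.univ) (t := S) ?_ ?_
          · simpa [hS] using hle
          · intro i _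
            refine dc ((j₀ : ℕ) - (i : ℕ)) j₀ hj₀S _ ?_
            show (i : ℕ) + ((j₀ : ℕ) - (i : ℕ)) = (j₀ : ℕ)
            have := Fin.is_le i
            omega
          · intro a _ b _ hab
            have := congrArg Fin.val hab
            exact Fin.ext (by simpa using this)
        omega
      obtain ⟨s, t, hsS, htS, hts⟩ := hex
      have hst : t ≠ s := fun e => htS (e ▸ hsS)
      set S' : Finset (Fin n) := insert t (S.erase s) with hS'_def
      have htE : t ∉ S.erase s := fun h => htS (Finset.mem_of_mem_erase h)
      have hS'card : S'.card = k := by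
        rw [hS'_def, Finset.card_insert_of_notMem htE, Finset.card_erase_of_mem hsS, hS]
        omega
      have hsum : (∑ j ∈ S', (j : ℕ)) + 1 = N := by
        rw [hS'_def, Finset.sum_insert htE]
        have h2 : (∑ x ∈ S.erase s, (x : ℕ)) + (s : ℕ) = N := by
          rw [Finset.sum_erase_add S _ hsS, hN]
        omega
      have hNpos : 1 ≤ N := by omega
      -- the swap relation
      have claim : ∀ x, eS hk S' hS'card x = Equiv.swap t s (eS hk S hS x) := by
        intro x
        cases x with
        | inl i =>
          show S'.orderEmbOfFin hS'card i = Equiv.swap t s (S.orderEmbOfFin hS i)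
          rw [Equiv.swap_comm]
          apply orderEmb_swap S S' hS s t hsS htS hS'_def
          intro u huS hus
          have hut : u ≠ t := fun e => htS (e ▸ huS)
          have h1 : (u : ℕ) ≠ (s : ℕ) := fun e => hus (Fin.ext e)
          have h2 : (u : ℕ) ≠ (t : ℕ) := fun e => hut (Fin.ext e)
          simp only [Fin.lt_def]
          omega
        | inr i =>
          show S'ᶜ.orderEmbOfFin (compl_card hS'card) i
            = Equiv.swap t s (Sᶜ.orderEmbOfFin (compl_card hS) i)
          have hcompl : S'ᶜ = insert s ((Sᶜ).erase t) := by
            ext j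
            simp only [hS'_def, Finset.mem_compl, Finset.mem_insert, Finset.mem_erase]
            by_cases h1 : j = s <;> by_cases h2 : j = t <;> simp_all
          apply orderEmb_swap Sᶜ S'ᶜ (compl_card hS) t s
            (Finset.mem_compl.2 htS) (by simp [hsS]) hcompl
          intro u huS hut
          have hus : u ≠ s := fun e => (Finset.mem_compl.1 huS) (e ▸ hsS)
          have h1 : (u : ℕ) ≠ (s : ℕ) := fun e => hus (Fin.ext e)
          have h2 : (u : ℕ) ≠ (t : ℕ) := fun e => hut (Fin.ext e)
          simp only [Fin.lt_def]
          omega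
      have hperm : rho hk S' hS'card = Equiv.swap t s * rho hk S hS := by
        apply Equiv.ext
        intro j
        obtain ⟨x, rfl⟩ := (e0 hk).surjective j
        rw [Equiv.Perm.mul_apply, rho_apply, rho_apply, claim x]
      have hIH := IH (N - 1) (by omega) S' hS'card (by omega)
      have hsign : Equiv.Perm.sign (rho hk S' hS'card)
          = -Equiv.Perm.sign (rho hk S hS) := by
        rw [hperm, map_mul, Equiv.Perm.sign_swap hst, neg_one_mul]
      rw [hsign] at hIH
      have h3 : Equiv.Perm.sign (rho hk S hS) = -(-1) ^ (N - 1 + k * (k - 1) / 2) :=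
        (neg_eq_iff_eq_neg.1 hIH).symm ▸ rfl
      have h4 : Equiv.Perm.sign (rho hk S hS) = -(-1) ^ (N - 1 + k * (k - 1) / 2) := by
        rw [← hIH, neg_neg]
      have hexp : N + k * (k - 1) / 2 = (N - 1 + k * (k - 1) / 2) + 1 := by omega
      rw [h4, hexp, pow_succ, mul_neg_one]

private lemma neg_one_pow_mod {R : Type*} [Ring R] (a : ℕ) :
    (-1 : R) ^ a = (-1 : R) ^ (a % 2) := by
  conv_lhs => rw [← Nat.div_add_mod a 2]
  rw [pow_add, pow_mul, neg_one_sq, one_pow, one_mul]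

private lemma half_succ (k : ℕ) : k * (k + 1) / 2 = k * (k - 1) / 2 + k := by
  obtain ⟨c2, hc2⟩ := Nat.even_mul_succ_self k
  have e3 : Even (k * (k - 1)) := by
    rcases Nat.even_or_odd k with h | h
    · exact h.mul_right _
    · have h2 : Even (k - 1) := Nat.Odd.sub_odd h odd_one
      exact h2.mul_left _
  obtain ⟨c3, hc3⟩ := e3
  have e4 : k * (k + 1) = k * (k - 1) + 2 * k := by
    cases k with
    | zero => simp
    | succ m =>
      simp only [Nat.succ_sub_one]
      ring
  rw [hc2, hc3]
  rw [hc2, hc3] at e4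
  omega

private lemma coeff_eq {R : Type*} [CommRing R] (hk : k ≤ n)
    (S : Finset (Fin n)) (hS : S.card = k) :
    ((Equiv.Perm.sign (rho hk S hS) : ℤ) : R)
      = (-1 : R) ^ ((∑ j ∈ S, ((j : ℕ) + 1)) + k * (k + 1) / 2) := by
  have h1 := sign_rho_aux hk (∑ j ∈ S, (j : ℕ)) S hS rfl
  rw [h1]
  have e1 : (∑ j ∈ S, ((j : ℕ) + 1)) = (∑ j ∈ S, (j : ℕ)) + k := by
    rw [Finset.sum_add_distrib, Finset.sum_const, hS, smul_eq_mul, mul_one]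
  rw [e1, half_succ]
  have hcast : (((((-1 : ℤˣ)) ^ ((∑ j ∈ S, (j : ℕ)) + k * (k - 1) / 2) : ℤˣ) : ℤ) : R)
      = (-1 : R) ^ ((∑ j ∈ S, (j : ℕ)) + k * (k - 1) / 2) := by
    push_cast
    ring
  rw [hcast]
  generalize (∑ j ∈ S, (j : ℕ)) = m
  generalize k * (k - 1) / 2 = C
  have : m + k + (C + k) = (m + C) + 2 * k := by ring
  rw [this]
  simp [pow_add, pow_mul]

private def Fbig (hk : k ≤ n)
    (x : {S : Finset (Fin n) // S.card = k} × (Equiv.Perm (Fin k) × Equiv.Perm (Fin (n - k)))) :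
    Equiv.Perm (Fin n) :=
  (eS hk x.1.1 x.1.2).symm.trans ((Equiv.sumCongr x.2.1 x.2.2).trans (e0 hk))

private lemma Fbig_apply (hk : k ≤ n) (S : Finset (Fin n)) (hS : S.card = k)
    (σ₁ : Equiv.Perm (Fin k)) (σ₂ : Equiv.Perm (Fin (n - k))) (x : Fin k ⊕ Fin (n - k)) :
    Fbig hk (⟨S, hS⟩, σ₁, σ₂) (eS hk S hS x) = e0 hk (Equiv.sumCongr σ₁ σ₂ x) := by
  simp [Fbig]

private lemma Fbig_mem (hk : k ≤ n) (S : Finset (Fin n)) (hS : S.card = k)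
    (σ₁ : Equiv.Perm (Fin k)) (σ₂ : Equiv.Perm (Fin (n - k))) (j : Fin n) :
    j ∈ S ↔ ((Fbig hk (⟨S, hS⟩, σ₁, σ₂) j : Fin n) : ℕ) < k := by
  obtain ⟨x, rfl⟩ := (eS hk S hS).surjective j
  rw [Fbig_apply]
  cases x with
  | inl i =>
    simp only [Equiv.sumCongr_apply, Sum.map_inl, e0_inl]
    constructor
    · intro _
      exact (σ₁ i).isLt
    · intro _
      show finSumEquivOfFinset hS (compl_card hS) (Sum.inl i) ∈ S
      rw [finSumEquivOfFinset_inl]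
      exact Finset.orderEmbOfFin_mem S hS i
  | inr i =>
    simp only [Equiv.sumCongr_apply, Sum.map_inr, e0_inr]
    constructor
    · intro hmem
      exfalso
      have : finSumEquivOfFinset hS (compl_card hS) (Sum.inr i) ∈ Sᶜ := by
        rw [finSumEquivOfFinset_inr]
        exact Finset.orderEmbOfFin_mem Sᶜ (compl_card hS) i
      exact (Finset.mem_compl.1 this) hmem
    · intro hlt
      exfalso
      simp only [Fin.coe_cast, Fin.coe_natAdd] at hlt
      omega

private lemma Fbig_sign (hk : k ≤ n) (S : Finset (Fin n)) (hS : S.card = k)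
    (σ₁ : Equiv.Perm (Fin k)) (σ₂ : Equiv.Perm (Fin (n - k))) :
    Equiv.Perm.sign (Fbig hk (⟨S, hS⟩, σ₁, σ₂))
      = Equiv.Perm.sign (rho hk S hS) * (Equiv.Perm.sign σ₁ * Equiv.Perm.sign σ₂) := by
  have hdecomp : Fbig hk (⟨S, hS⟩, σ₁, σ₂)
      = (rho hk S hS).symm * ((eS hk S hS).permCongr (Equiv.sumCongr σ₁ σ₂)) := by
    apply Equiv.ext
    intro j
    simp [Fbig, rho, Equiv.Perm.mul_apply, Equiv.permCongr_apply]
  rw [hdecomp, map_mul, Equiv.Perm.sign_symm, Equiv.Perm.sign_permCongr,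
    Equiv.Perm.sign_sumCongr]

private lemma Fbig_bij (hk : k ≤ n) : Function.Bijective (Fbig (n := n) (k := k) hk) := by
  rw [Fintype.bijective_iff_injective_and_card]
  constructor
  · rintro ⟨⟨S, hS⟩, σ₁, σ₂⟩ ⟨⟨T, hT⟩, τ₁, τ₂⟩ h
    have hST : S = T := by
      ext j
      rw [Fbig_mem hk S hS σ₁ σ₂ j, Fbig_mem hk T hT τ₁ τ₂ j, h]
    subst hST
    obtain rfl := Subsingleton.elim hS hT
    have hπ : ∀ x, Equiv.sumCongr σ₁ σ₂ x = Equiv.sumCongr τ₁ τ₂ x := by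
      intro x
      have h2 := DFunLike.congr_fun h (eS hk S hS x)
      rw [Fbig_apply, Fbig_apply] at h2
      exact (e0 hk).injective h2
    have h1 : σ₁ = τ₁ := by
      apply Equiv.ext
      intro i
      have := hπ (Sum.inl i)
      simpa using this
    have h2 : σ₂ = τ₂ := by
      apply Equiv.ext
      intro i
      have := hπ (Sum.inr i)
      simpa using this
    simp [h1, h2]
  · rw [Fintype.card_prod, Fintype.card_prod, Fintype.card_finset_len,
      Fintype.card_perm, Fintype.card_perm, Fintype.card_perm,
      Fintype.card_fin, Fintype.card_fin, Fintype.card_fin,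
      ← Nat.choose_mul_factorial_mul_factorial hk, mul_assoc]

/-- **Generalized Laplace expansion along the first `k` rows.**
For a commutative ring `R`, `1 ≤ n`, `k ≤ n`, and an `n × n` matrix `M` over `R`,
`det M = ∑_S (−1)^{σ(S) + k(k+1)/2} · det (M[{1,…,k}, S]) · det (M[{k+1,…,n}, Sᶜ])`,
where `S` ranges over all `k`-element subsets of the columns, `σ(S)` is the sum of the
1-indexed positions of the elements of `S`, and submatrices take the rows/columns in
increasing order. -/
theorem laplace_expansion_first_rows (R : Type*) [CommRing R] (n k : ℕ)
    (hn : 1 ≤ n) (hk : k ≤ n) (M : Matrix (Fin n) (Fin n) R) :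
    M.det = ∑ S : {S : Finset (Fin n) // S.card = k},
      (-1 : R) ^ ((∑ j ∈ S.1, (j.val + 1)) + k * (k + 1) / 2) *
        (M.submatrix (fun i : Fin k => Fin.castLE hk i)
          (fun i : Fin k => S.1.orderEmbOfFin S.2 i)).det *
        (M.submatrix
          (fun i : Fin (n - k) => Fin.cast (Nat.add_sub_cancel' hk) (Fin.natAdd k i))
          (fun i : Fin (n - k) => (S.1ᶜ).orderEmbOfFin
            (by simp [Finset.card_compl, S.2]) i)).det := by
  classical
  have step1 : M.det = ∑ x : {S : Finset (Fin n) // S.card = k} ×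
      (Equiv.Perm (Fin k) × Equiv.Perm (Fin (n - k))),
      ((Equiv.Perm.sign (Fbig hk x) : ℤ) : R) * ∏ j, M (Fbig hk x j) j := by
    rw [Matrix.det_apply' M]
    exact (Fintype.sum_bijective (Fbig hk) (Fbig_bij hk) _ _ (fun x => rfl)).symm
  rw [step1, Fintype.sum_prod_type]
  refine Finset.sum_congr rfl ?_
  rintro ⟨S, hS⟩ -
  rw [Fintype.sum_prod_type]
  rw [Matrix.det_apply', Matrix.det_apply', mul_assoc, Finset.sum_mul_sum, Finset.mul_sum]
  simp_rw [Finset.mul_sum]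
  refine Finset.sum_congr rfl ?_
  intro σ₁ _
  refine Finset.sum_congr rfl ?_
  intro σ₂ _
  have hprod : (∏ j, M (Fbig hk (⟨S, hS⟩, σ₁, σ₂) j) j)
      = (∏ i : Fin k, M (Fin.castLE hk (σ₁ i)) (S.orderEmbOfFin hS i))
        * ∏ i : Fin (n - k), M (Fin.cast (Nat.add_sub_cancel' hk) (Fin.natAdd k (σ₂ i)))
            (Sᶜ.orderEmbOfFin (compl_card hS) i) := by
    rw [← Equiv.prod_comp (eS hk S hS) (fun j => M (Fbig hk (⟨S, hS⟩, σ₁, σ₂) j) j)]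
    rw [Fintype.prod_sum_type]
    congr 1
    · refine Finset.prod_congr rfl ?_
      intro i _
      rw [Fbig_apply]
      simp only [Equiv.sumCongr_apply, Sum.map_inl, e0_inl]
      congr 1
    · refine Finset.prod_congr rfl ?_
      intro i _
      rw [Fbig_apply]
      simp only [Equiv.sumCongr_apply, Sum.map_inr, e0_inr]
      congr 1
  rw [hprod, Fbig_sign hk S hS σ₁ σ₂]
  rw [← coeff_eq hk S hS]
  simp only [Matrix.submatrix_apply, Units.val_mul, Int.cast_mul]
  ring
end

section
/- Poisson condition criterion: let n : ℕ and let p : Fin n → Fin n → MvPolynomial (Fin n) ℝ satisfy p j i = −(p i j) for all i, j. Define the bracket {f, g} := Σ_{i,j} (p i j) * (pderiv i f) * (pderiv j g). Then the Jacobi identity {{f,g},h} + {{g,h},f} + {{h,f},g} = 0 holds for all polynomials f, g, h if and only if for all indices i, j, k one has Σ_λ ( (p k λ) * pderiv λ (p i j) + (p i λ) * pderiv λ (p j k) + (p j λ) * pderiv λ (p k i) ) = 0. -/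
open MvPolynomial

/-- The Poisson-type bracket associated with a family of coefficients
`p i j = {x_i, x_j}` : `{f, g} = ∑_{i,j} p i j · ∂_i f · ∂_j g`. -/
noncomputable def pbracket {n : ℕ} (p : Fin n → Fin n → MvPolynomial (Fin n) ℝ)
    (f g : MvPolynomial (Fin n) ℝ) : MvPolynomial (Fin n) ℝ :=
  ∑ i, ∑ j, p i j * pderiv i f * pderiv j g

section Aux
variable {n : ℕ}

variable {n : ℕ}

lemma pderiv_comm' {σ : Type*} [DecidableEq σ] (a b : σ) (f : MvPolynomial σ ℝ) :
    pderiv a (pderiv b f) = pderiv b (pderiv a f) := by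
  induction f using MvPolynomial.induction_on with
  | C c => simp
  | add f g hf hg => simp [hf, hg]
  | mul_X f i hf =>
    simp only [pderiv_mul, pderiv_X, Pi.single_apply, map_add, map_mul, hf,
      apply_ite (pderiv a), apply_ite (pderiv b), map_one, map_zero]
    simp only [pderiv_one, map_zero, ite_self, mul_zero, add_zero]
    ring

lemma sum4_eq {M : Type*} [AddCommMonoid M] (F : Fin n → Fin n → Fin n → Fin n → M) :
    ∑ a, ∑ b, ∑ i, ∑ j, F a b i j
      = ∑ x : Fin n × Fin n × Fin n × Fin n, F x.1 x.2.1 x.2.2.1 x.2.2.2 := by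
  simp [Fintype.sum_prod_type]

lemma sum4_reindex {M : Type*} [AddCommMonoid M] (F : Fin n → Fin n → Fin n → Fin n → M) :
    ∑ a, ∑ b, ∑ i, ∑ j, F a b i j = ∑ a, ∑ b, ∑ i, ∑ j, F i j b a := by
  rw [sum4_eq F, sum4_eq (fun a b i j => F i j b a)]
  exact Fintype.sum_equiv
    ⟨fun x => (x.2.2.2, x.2.2.1, x.1, x.2.1), fun y => (y.2.2.1, y.2.2.2, y.2.1, y.1),
      fun x => rfl, fun y => rfl⟩ _ _ (fun x => rfl)

lemma expand_double (p : Fin n → Fin n → MvPolynomial (Fin n) ℝ)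
    (f g h : MvPolynomial (Fin n) ℝ) :
    pbracket p (pbracket p f g) h
      = (∑ a, ∑ b, ∑ i, ∑ j,
          p a b * pderiv a (p i j) * pderiv i f * pderiv j g * pderiv b h)
      + (∑ a, ∑ b, ∑ i, ∑ j,
          p a b * p i j * pderiv a (pderiv i f) * pderiv j g * pderiv b h)
      + (∑ a, ∑ b, ∑ i, ∑ j,
          p a b * p i j * pderiv i f * pderiv a (pderiv j g) * pderiv b h) := by
  have step : pbracket p (pbracket p f g) h
      = ∑ a, ∑ b, ∑ i, ∑ j,
          (p a b * pderiv a (p i j) * pderiv i f * pderiv j g * pderiv b h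
           + p a b * p i j * pderiv a (pderiv i f) * pderiv j g * pderiv b h
           + p a b * p i j * pderiv i f * pderiv a (pderiv j g) * pderiv b h) := by
    unfold pbracket
    refine Finset.sum_congr rfl fun a _ => Finset.sum_congr rfl fun b _ => ?_
    simp only [map_sum, pderiv_mul, Finset.mul_sum, Finset.sum_mul]
    refine Finset.sum_congr rfl fun i _ => Finset.sum_congr rfl fun j _ => ?_
    ring
  rw [step]
  simp [Finset.sum_add_distrib]

lemma sum4_perm1 {M : Type*} [AddCommMonoid M] (F : Fin n → Fin n → Fin n → Fin n → M) :
    ∑ a, ∑ b, ∑ i, ∑ j, F a b i j = ∑ a, ∑ b, ∑ i, ∑ j, F j i a b := by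
  rw [sum4_eq F, sum4_eq (fun a b i j => F j i a b)]
  exact Fintype.sum_equiv
    ⟨fun x => (x.2.2.1, x.2.2.2, x.2.1, x.1), fun y => (y.2.2.2, y.2.2.1, y.1, y.2.1),
      fun x => rfl, fun y => rfl⟩ _ _ (fun x => rfl)

lemma sum4_perm2 {M : Type*} [AddCommMonoid M] (F : Fin n → Fin n → Fin n → Fin n → M) :
    ∑ a, ∑ b, ∑ i, ∑ j, F a b i j = ∑ a, ∑ b, ∑ i, ∑ j, F j a b i := by
  rw [sum4_eq F, sum4_eq (fun a b i j => F j a b i)]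
  exact Fintype.sum_equiv
    ⟨fun x => (x.2.1, x.2.2.1, x.2.2.2, x.1), fun y => (y.2.2.2, y.1, y.2.1, y.2.2.1),
      fun x => rfl, fun y => rfl⟩ _ _ (fun x => rfl)

lemma sum4_perm3 {M : Type*} [AddCommMonoid M] (F : Fin n → Fin n → Fin n → Fin n → M) :
    ∑ a, ∑ b, ∑ i, ∑ j, F a b i j = ∑ a, ∑ b, ∑ i, ∑ j, F j b i a := by
  rw [sum4_eq F, sum4_eq (fun a b i j => F j b i a)]
  exact Fintype.sum_equiv
    ⟨fun x => (x.2.2.2, x.2.1, x.2.2.1, x.1), fun y => (y.2.2.2, y.2.1, y.2.2.1, y.1),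
      fun x => rfl, fun y => rfl⟩ _ _ (fun x => rfl)

lemma cancel (p : Fin n → Fin n → MvPolynomial (Fin n) ℝ)
    (hanti : ∀ i j, p j i = - p i j) (f g h : MvPolynomial (Fin n) ℝ) :
    (∑ a, ∑ b, ∑ i, ∑ j,
        p a b * p i j * pderiv a (pderiv i f) * pderiv j g * pderiv b h)
    + (∑ a, ∑ b, ∑ i, ∑ j,
        p a b * p i j * pderiv i h * pderiv a (pderiv j f) * pderiv b g) = 0 := by
  rw [sum4_reindex (fun a b i j =>
    p a b * p i j * pderiv i h * pderiv a (pderiv j f) * pderiv b g)]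
  simp only [← Finset.sum_add_distrib]
  refine Finset.sum_eq_zero fun a _ => Finset.sum_eq_zero fun b _ =>
    Finset.sum_eq_zero fun i _ => Finset.sum_eq_zero fun j _ => ?_
  rw [hanti a b, pderiv_comm' i a f]
  ring

lemma master (p : Fin n → Fin n → MvPolynomial (Fin n) ℝ)
    (hanti : ∀ i j, p j i = - p i j) (f g h : MvPolynomial (Fin n) ℝ) :
    pbracket p (pbracket p f g) h + pbracket p (pbracket p g h) f
      + pbracket p (pbracket p h f) g
      + ∑ i, ∑ j, ∑ k, (∑ l, (p k l * pderiv l (p i j) + p i l * pderiv l (p j k)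
          + p j l * pderiv l (p k i))) * (pderiv i f * pderiv j g * pderiv k h) = 0 := by
  rw [expand_double p f g h, expand_double p g h f, expand_double p h f g]
  have c1 := cancel p hanti f g h
  have c2 := cancel p hanti g h f
  have c3 := cancel p hanti h f g
  -- rewrite the three S1-type sums
  have e1 : (∑ a, ∑ b, ∑ i, ∑ j,
        p a b * pderiv a (p i j) * pderiv i f * pderiv j g * pderiv b h)
      = ∑ a, ∑ b, ∑ i, ∑ j,
          -(p i j * pderiv j (p a b) * (pderiv a f * pderiv b g * pderiv i h)) := by
    rw [sum4_perm1 (fun a b i j =>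
      p a b * pderiv a (p i j) * pderiv i f * pderiv j g * pderiv b h)]
    refine Finset.sum_congr rfl fun a _ => Finset.sum_congr rfl fun b _ =>
      Finset.sum_congr rfl fun i _ => Finset.sum_congr rfl fun j _ => ?_
    rw [hanti i j]
    ring
  have e2 : (∑ a, ∑ b, ∑ i, ∑ j,
        p a b * pderiv a (p i j) * pderiv i g * pderiv j h * pderiv b f)
      = ∑ a, ∑ b, ∑ i, ∑ j,
          -(p a j * pderiv j (p b i) * (pderiv a f * pderiv b g * pderiv i h)) := by
    rw [sum4_perm2 (fun a b i j =>
      p a b * pderiv a (p i j) * pderiv i g * pderiv j h * pderiv b f)]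
    refine Finset.sum_congr rfl fun a _ => Finset.sum_congr rfl fun b _ =>
      Finset.sum_congr rfl fun i _ => Finset.sum_congr rfl fun j _ => ?_
    rw [hanti j a]
    ring
  have e3 : (∑ a, ∑ b, ∑ i, ∑ j,
        p a b * pderiv a (p i j) * pderiv i h * pderiv j f * pderiv b g)
      = ∑ a, ∑ b, ∑ i, ∑ j,
          -(p b j * pderiv j (p i a) * (pderiv a f * pderiv b g * pderiv i h)) := by
    rw [sum4_perm3 (fun a b i j =>
      p a b * pderiv a (p i j) * pderiv i h * pderiv j f * pderiv b g)]
    refine Finset.sum_congr rfl fun a _ => Finset.sum_congr rfl fun b _ =>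
      Finset.sum_congr rfl fun i _ => Finset.sum_congr rfl fun j _ => ?_
    rw [hanti j b]
    ring
  have hsplit : (∑ i, ∑ j, ∑ k, (∑ l, (p k l * pderiv l (p i j) + p i l * pderiv l (p j k)
          + p j l * pderiv l (p k i))) * (pderiv i f * pderiv j g * pderiv k h))
      = (∑ a, ∑ b, ∑ i, ∑ j,
          p i j * pderiv j (p a b) * (pderiv a f * pderiv b g * pderiv i h))
        + (∑ a, ∑ b, ∑ i, ∑ j,
          p a j * pderiv j (p b i) * (pderiv a f * pderiv b g * pderiv i h))
        + (∑ a, ∑ b, ∑ i, ∑ j,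
          p b j * pderiv j (p i a) * (pderiv a f * pderiv b g * pderiv i h)) := by
    simp only [Finset.sum_mul, add_mul, Finset.sum_add_distrib]
  rw [e1, e2, e3, hsplit]
  simp only [Finset.sum_neg_distrib]
  linear_combination c1 + c2 + c3

end Aux

/-- **Poisson condition criterion.** For an antisymmetric family
`p : Fin n → Fin n → MvPolynomial (Fin n) ℝ`, the bracket
`{f, g} := ∑_{i,j} p i j · ∂_i f · ∂_j g` satisfies the Jacobi identity for all
polynomials `f, g, h` if and only if for all indices `i, j, k` the cyclic sum
`∑_λ (p k λ · ∂_λ (p i j) + p i λ · ∂_λ (p j k) + p j λ · ∂_λ (p k i))` vanishes. -/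
theorem poisson_condition_iff_jacobi {n : ℕ}
    (p : Fin n → Fin n → MvPolynomial (Fin n) ℝ)
    (hanti : ∀ i j, p j i = - p i j) :
    (∀ f g h : MvPolynomial (Fin n) ℝ,
        pbracket p (pbracket p f g) h + pbracket p (pbracket p g h) f
          + pbracket p (pbracket p h f) g = 0)
      ↔ (∀ i j k : Fin n,
          ∑ l, (p k l * pderiv l (p i j) + p i l * pderiv l (p j k)
            + p j l * pderiv l (p k i)) = 0) := by
  constructor
  · intro hJ i j k
    have hm := master p hanti (X i) (X j) (X k)
    rw [hJ (X i) (X j) (X k), zero_add] at hm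
    simpa [pderiv_X, Pi.single_apply, mul_ite, ite_mul, mul_one, mul_zero, zero_mul,
      Finset.sum_ite_eq, Finset.sum_ite_eq'] using hm
  · intro hC f g h
    have hm := master p hanti f g h
    simpa [hC] using hm
end

section
/- A family of Poisson structures of type (2) on ℝ³: let φ, f, g ∈ MvPolynomial (Fin 3) ℝ with pderiv 0 f = 0 and pderiv 0 g = 0 (i.e. f and g are polynomials in the last two variables only). Define p 0 1 := φ*f, p 1 0 := −φ*f, p 0 2 := φ*g, p 2 0 := −φ*g, p 1 2 := 0, p 2 1 := 0, and p i i := 0. Then p satisfies the Poisson condition: for all i, j, k : Fin 3, Σ_λ ( (p k λ) * pderiv λ (p i j) + (p i λ) * pderiv λ (p j k) + (p j λ) * pderiv λ (p k i) ) = 0. Hence φ·∂₁∧(f(x₂,x₃)∂₂ + g(x₂,x₃)∂₃) is a Poisson structure on ℝ³. -/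
open MvPolynomial

/-- The coefficient family of the 2-vector field
`φ·∂₁ ∧ (f(x₂,x₃)·∂₂ + g(x₂,x₃)·∂₃)` on `ℝ³`:
`p 0 1 = φ·f`, `p 0 2 = φ·g`, `p 1 2 = 0`, extended antisymmetrically with zero diagonal. -/
noncomputable def pType2 (φ f g : MvPolynomial (Fin 3) ℝ) :
    Fin 3 → Fin 3 → MvPolynomial (Fin 3) ℝ :=
  ![![0, φ * f, φ * g], ![-(φ * f), 0, 0], ![-(φ * g), 0, 0]]

section aux
variable (φ f g : MvPolynomial (Fin 3) ℝ)
lemma pType2_00 : pType2 φ f g 0 0 = 0 := rfl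
lemma pType2_01 : pType2 φ f g 0 1 = φ * f := rfl
lemma pType2_02 : pType2 φ f g 0 2 = φ * g := rfl
lemma pType2_10 : pType2 φ f g 1 0 = -(φ * f) := rfl
lemma pType2_11 : pType2 φ f g 1 1 = 0 := rfl
lemma pType2_12 : pType2 φ f g 1 2 = 0 := rfl
lemma pType2_20 : pType2 φ f g 2 0 = -(φ * g) := rfl
lemma pType2_21 : pType2 φ f g 2 1 = 0 := rfl
lemma pType2_22 : pType2 φ f g 2 2 = 0 := rfl
end aux

set_option maxHeartbeats 2000000 in
/-- **A family of Poisson structures of type (2) on ℝ³.**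
If `f` and `g` are polynomials in the last two variables only (`∂₀ f = ∂₀ g = 0`), then
for any polynomial `φ` the family `p` with `p 0 1 = φ·f`, `p 0 2 = φ·g`, `p 1 2 = 0`
satisfies the Poisson condition; hence `φ·∂₁∧(f(x₂,x₃)∂₂ + g(x₂,x₃)∂₃)` is a Poisson
structure on `ℝ³`. -/
theorem type2_is_poisson (φ f g : MvPolynomial (Fin 3) ℝ)
    (hf : pderiv 0 f = 0) (hg : pderiv 0 g = 0) :
    ∀ i j k : Fin 3,
      ∑ l, (pType2 φ f g k l * pderiv l (pType2 φ f g i j)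
        + pType2 φ f g i l * pderiv l (pType2 φ f g j k)
        + pType2 φ f g j l * pderiv l (pType2 φ f g k i)) = 0 := by
  intro i j k
  fin_cases i <;> fin_cases j <;> fin_cases k <;>
    simp only [Fin.mk_zero, Fin.mk_one, show (⟨2, by omega⟩ : Fin 3) = 2 from rfl,
      Fin.sum_univ_three, Fin.isValue, pType2_00, pType2_01, pType2_02, pType2_10, pType2_11,
      pType2_12, pType2_20, pType2_21, pType2_22,
      map_zero, map_neg, map_mul, Derivation.leibniz, smul_eq_mul, hf, hg,
      mul_zero, zero_mul, neg_zero, add_zero, zero_add, neg_neg] <;> ring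
end

section
/- Poisson structures of monomial type on ℝⁿ: let n, q : ℕ, and let c : Fin n → Fin n → ℝ be antisymmetric (c j i = −c i j). Define p i j := C (c i j) * (X i)^q * (X j)^q in MvPolynomial (Fin n) ℝ. Then p satisfies the Poisson condition: for all i, j, k : Fin n, Σ_λ ( (p k λ) * pderiv λ (p i j) + (p i λ) * pderiv λ (p j k) + (p j λ) * pderiv λ (p k i) ) = 0. Hence the 2-vector field (1/2)·Σ_{i,j} c_{ij} x_i^q ∂_i ∧ x_j^q ∂_j is a Poisson structure on ℝⁿ. -/
open MvPolynomial

lemma pd_aux {n : ℕ} (q : ℕ) (a : ℝ) (i j l : Fin n) :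
    pderiv l (C a * X i ^ q * X j ^ q : MvPolynomial (Fin n) ℝ)
      = (if i = l then C a * ((q : MvPolynomial (Fin n) ℝ) * X i ^ (q-1) * X j ^ q) else 0)
      + (if j = l then C a * ((q : MvPolynomial (Fin n) ℝ) * X i ^ q * X j ^ (q-1)) else 0) := by
  rw [mul_assoc, pderiv_C_mul, pderiv_mul, pderiv_pow, pderiv_pow]
  rcases eq_or_ne i l with hi | hi <;> rcases eq_or_ne j l with hj | hj <;>
    simp [hi, hj, pderiv_X_of_ne] <;> first | ring1 | exact Or.inl trivial | exact Or.inl (by ring)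

/-- **Poisson structures of monomial type on ℝⁿ.**
Let `c : Fin n → Fin n → ℝ` be antisymmetric and `q : ℕ`.  Then the family
`p i j := C (c i j) * (X i)^q * (X j)^q` satisfies the Poisson condition; hence the
2-vector field `(1/2)·∑_{i,j} c_{ij} x_i^q ∂_i ∧ x_j^q ∂_j` is a Poisson structure
on `ℝⁿ`. -/
theorem monomial_type_is_poisson (n q : ℕ)
    (c : Fin n → Fin n → ℝ) (hanti : ∀ i j, c j i = - c i j) :
    ∀ i j k : Fin n,
      ∑ l, ((C (c k l) * X k ^ q * X l ^ q)
            * pderiv l (C (c i j) * X i ^ q * X j ^ q)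
        + (C (c i l) * X i ^ q * X l ^ q)
            * pderiv l (C (c j k) * X j ^ q * X k ^ q)
        + (C (c j l) * X j ^ q * X l ^ q)
            * pderiv l (C (c k i) * X k ^ q * X i ^ q)) = 0 := by
  intro i j k
  have e1 : (C (c j i) : MvPolynomial (Fin n) ℝ) = - C (c i j) := by rw [hanti i j, map_neg]
  have e2 : (C (c k i) : MvPolynomial (Fin n) ℝ) = - C (c i k) := by rw [hanti i k, map_neg]
  have e3 : (C (c k j) : MvPolynomial (Fin n) ℝ) = - C (c j k) := by rw [hanti j k, map_neg]
  simp only [pd_aux, mul_add, mul_ite, mul_zero, Finset.sum_add_distrib,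
    Finset.sum_ite_eq, Finset.mem_univ, if_true]
  simp only [e1, e2, e3]
  ring
end

section
/- Rigidity of function multiples of a constant symplectic structure on ℝ⁴: let c : Fin 4 → Fin 4 → ℝ be antisymmetric with c 0 1 * c 2 3 − c 0 2 * c 1 3 + c 0 3 * c 1 2 ≠ 0 (i.e. π₀ ∧ π₀ ≠ 0, π₀ is nondegenerate), and let f ∈ MvPolynomial (Fin 4) ℝ. If the family p i j := f * C (c i j) satisfies the Poisson condition — for all i, j, k : Fin 4, Σ_λ ( (p k λ) * pderiv λ (p i j) + (p i λ) * pderiv λ (p j k) + (p j λ) * pderiv λ (p k i) ) = 0 — then f is a constant polynomial (pderiv λ f = 0 for every λ; equivalently f ∈ Set.range C). -/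
open MvPolynomial

/-- **Rigidity of function multiples of a constant symplectic structure on ℝ⁴.**
Let `c : Fin 4 → Fin 4 → ℝ` be antisymmetric and nondegenerate
(`c 0 1 * c 2 3 − c 0 2 * c 1 3 + c 0 3 * c 1 2 ≠ 0`, i.e. `π₀ ∧ π₀ ≠ 0`).
If the family `p i j := f * C (c i j)` satisfies the Poisson condition, then `f` is a
constant polynomial: `pderiv λ f = 0` for every `λ`. -/
theorem smul_const_symplectic_rigid_dim4
    (c : Fin 4 → Fin 4 → ℝ) (hanti : ∀ i j, c j i = - c i j)
    (hnondeg : c 0 1 * c 2 3 - c 0 2 * c 1 3 + c 0 3 * c 1 2 ≠ 0)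
    (f : MvPolynomial (Fin 4) ℝ)
    (hpoisson : ∀ i j k : Fin 4,
      ∑ l, ((f * C (c k l)) * pderiv l (f * C (c i j))
        + (f * C (c i l)) * pderiv l (f * C (c j k))
        + (f * C (c j l)) * pderiv l (f * C (c k i))) = 0) :
    ∀ l : Fin 4, pderiv l f = 0 := by
  have hzero : ∀ i, c i i = 0 := fun i => by have := hanti i i; linarith
  have key : ∀ l : Fin 4,
      f * pderiv l f * C (c 0 1 * c 2 3 - c 0 2 * c 1 3 + c 0 3 * c 1 2) = 0 →
      pderiv l f = 0 := by
    intro l hkey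
    have hC : (C (c 0 1 * c 2 3 - c 0 2 * c 1 3 + c 0 3 * c 1 2) : MvPolynomial (Fin 4) ℝ) ≠ 0 := by
      rwa [Ne, MvPolynomial.C_eq_zero]
    rcases mul_eq_zero.mp hkey with h | h
    · rcases mul_eq_zero.mp h with h' | h'
      · simp [h']
      · exact h'
    · exact absurd h hC
  intro l
  fin_cases l
  · refine key 0 ?_
    have h := hpoisson 1 2 3
    simp only [Fin.sum_univ_four, pderiv_mul, pderiv_C, mul_zero, zero_add, add_zero,
      hanti 0 1, hanti 0 2, hanti 0 3, hanti 1 2, hanti 1 3, hanti 2 3,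
      hzero, map_neg, map_zero, neg_mul, mul_neg, neg_neg, zero_mul] at h
    simp only [map_sub, map_add, map_mul]
    linear_combination -h
  · refine key 1 ?_
    have h := hpoisson 0 2 3
    simp only [Fin.sum_univ_four, pderiv_mul, pderiv_C, mul_zero, zero_add, add_zero,
      hanti 0 1, hanti 0 2, hanti 0 3, hanti 1 2, hanti 1 3, hanti 2 3,
      hzero, map_neg, map_zero, neg_mul, mul_neg, neg_neg, zero_mul] at h
    simp only [map_sub, map_add, map_mul]
    linear_combination h
  · refine key 2 ?_
    have h := hpoisson 0 1 3
    simp only [Fin.sum_univ_four, pderiv_mul, pderiv_C, mul_zero, zero_add, add_zero,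
      hanti 0 1, hanti 0 2, hanti 0 3, hanti 1 2, hanti 1 3, hanti 2 3,
      hzero, map_neg, map_zero, neg_mul, mul_neg, neg_neg, zero_mul] at h
    simp only [map_sub, map_add, map_mul]
    linear_combination -h
  · refine key 3 ?_
    have h := hpoisson 0 1 2
    simp only [Fin.sum_univ_four, pderiv_mul, pderiv_C, mul_zero, zero_add, add_zero,
      hanti 0 1, hanti 0 2, hanti 0 3, hanti 1 2, hanti 1 3, hanti 2 3,
      hzero, map_neg, map_zero, neg_mul, mul_neg, neg_neg, zero_mul] at h
    simp only [map_sub, map_add, map_mul]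
    linear_combination h
end

section
/- Homogeneous components of Casimir polynomials are Casimir: let n, h : ℕ and let p : Fin n → Fin n → MvPolynomial (Fin n) ℝ be antisymmetric with each p i j homogeneous of degree h (p i j ∈ homogeneousSubmodule (Fin n) ℝ h). Define the bracket {f, g} := Σ_{i,j} (p i j) * (pderiv i f) * (pderiv j g). If f ∈ MvPolynomial (Fin n) ℝ satisfies {f, g} = 0 for every g, then for every d : ℕ the homogeneous component f_d = homogeneousComponent d f also satisfies {f_d, g} = 0 for every g. -/
open MvPolynomial

lemma pderiv_hc_mem (n d : ℕ) (f : MvPolynomial (Fin n) ℝ) (i : Fin n) :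
    pderiv i (homogeneousComponent d f) ∈ homogeneousSubmodule (Fin n) ℝ (d - 1) := by
  set φ := homogeneousComponent d f with hφdef
  have hφ : φ.IsHomogeneous d := homogeneousComponent_isHomogeneous d f
  rw [φ.as_sum, map_sum]
  apply Submodule.sum_mem
  intro s hs
  rw [pderiv_monomial]
  by_cases h0 : s i = 0
  · simp [h0]
  · rw [mem_homogeneousSubmodule]
    apply isHomogeneous_monomial
    have hdeg : s.degree = d := by
      rw [Finsupp.degree_eq_weight_one]; exact hφ (mem_support_iff.mp hs)
    have hle : Finsupp.single i 1 ≤ s := by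
      rw [Finsupp.single_le_iff]
      omega
    have : s = (s - Finsupp.single i 1) + Finsupp.single i 1 := by
      rw [tsub_add_cancel_of_le hle]
    have hd2 : s.degree = (s - Finsupp.single i 1).degree + 1 := by
      conv_lhs => rw [this]
      simp [Finsupp.degree_eq_weight_one, map_add, Finsupp.weight_apply, Finsupp.sum_single_index]
    omega

/-- **Homogeneous components of Casimir polynomials are Casimir.**
Let `p : Fin n → Fin n → MvPolynomial (Fin n) ℝ` be antisymmetric with each `p i j`
homogeneous of degree `h`, and consider the bracket
`{f, g} := ∑_{i,j} p i j · ∂_i f · ∂_j g`.  If `{f, g} = 0` for every `g`, then for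
every `d : ℕ` the degree-`d` homogeneous component of `f` also satisfies
`{f_d, g} = 0` for every `g`. -/
theorem homogeneousComponent_of_casimir_is_casimir (n h : ℕ)
    (p : Fin n → Fin n → MvPolynomial (Fin n) ℝ)
    (hanti : ∀ i j, p j i = - p i j)
    (hhom : ∀ i j, p i j ∈ homogeneousSubmodule (Fin n) ℝ h)
    (f : MvPolynomial (Fin n) ℝ)
    (hf : ∀ g : MvPolynomial (Fin n) ℝ,
      ∑ i, ∑ j, p i j * pderiv i f * pderiv j g = 0) :
    ∀ d : ℕ, ∀ g : MvPolynomial (Fin n) ℝ,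
      ∑ i, ∑ j, p i j * pderiv i (homogeneousComponent d f) * pderiv j g = 0 := by
  -- Step 1: it suffices to check g = X k
  have hB : ∀ k : Fin n, ∑ i, p i k * pderiv i f = 0 := by
    intro k
    have H := hf (X k)
    simpa [pderiv_X, Pi.single_apply, mul_ite, mul_one, mul_zero,
      Finset.sum_ite_eq, Finset.sum_ite_eq'] using H
  -- Step 2: each bracket-with-X_k of homogeneous component vanishes
  have key : ∀ d : ℕ, ∀ k : Fin n,
      ∑ i, p i k * pderiv i (homogeneousComponent d f) = 0 := by
    intro d k
    rcases Nat.eq_zero_or_pos d with hd0 | hd1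
    · subst hd0
      simp [homogeneousComponent_zero, pderiv_C]
    rcases le_or_gt d f.totalDegree with hdle | hdgt
    swap
    · simp [homogeneousComponent_eq_zero _ f hdgt]
    -- term e k := ∑ i, p i k * pderiv i (hc e f)
    set T : ℕ → MvPolynomial (Fin n) ℝ :=
      fun e => ∑ i, p i k * pderiv i (homogeneousComponent e f) with hT
    have hmem : ∀ e, 1 ≤ e → T e ∈ homogeneousSubmodule (Fin n) ℝ (h + (e - 1)) := by
      intro e he
      apply Submodule.sum_mem
      intro i _
      rw [mem_homogeneousSubmodule]
      exact IsHomogeneous.mul ((mem_homogeneousSubmodule _ _).mp (hhom i k))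
        ((mem_homogeneousSubmodule _ _).mp (pderiv_hc_mem n e f i))
    have expand : ∑ e ∈ Finset.range (f.totalDegree + 1), T e = 0 := by
      have : ∑ e ∈ Finset.range (f.totalDegree + 1), T e
          = ∑ i, p i k * pderiv i f := by
        rw [Finset.sum_comm]
        congr 1
        funext i
        rw [← Finset.mul_sum, ← map_sum, sum_homogeneousComponent]
      rw [this, hB k]
    have hz := congrArg (homogeneousComponent (h + (d - 1))) expand
    rw [map_sum, map_zero] at hz
    have heach : ∀ e ∈ Finset.range (f.totalDegree + 1),
        homogeneousComponent (h + (d - 1)) (T e)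
          = if e = d then T d else 0 := by
      intro e _
      rcases Nat.eq_zero_or_pos e with he0 | he1
      · subst he0
        have : T 0 = 0 := by
          simp [hT, homogeneousComponent_zero, pderiv_C]
        rw [this, map_zero, if_neg (by omega)]
      · rw [homogeneousComponent_of_mem (hmem e he1)]
        by_cases hed : e = d
        · subst hed; simp
        · rw [if_neg (by omega), if_neg hed]
    rw [Finset.sum_congr rfl heach, Finset.sum_ite_eq' _ d] at hz
    rw [if_pos (by simp; omega)] at hz
    show T d = 0
    exact hz
  -- Step 3: conclude for arbitrary g
  intro d g
  rw [Finset.sum_comm]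
  have : ∀ j : Fin n, ∑ i, p i j * pderiv i (homogeneousComponent d f) * pderiv j g
      = (∑ i, p i j * pderiv i (homogeneousComponent d f)) * pderiv j g := by
    intro j; rw [Finset.sum_mul]
  simp only [this, key d, zero_mul, Finset.sum_const_zero]
end

section
/- Basis of a complement via non-leading monomials: fix a monomial order m on MvPolynomial (Fin n) ℝ, a degree j : ℕ, and nonzero polynomials f₁, …, f_k, each homogeneous of degree j, whose leading multidegrees are pairwise distinct. Let W be the ℝ-span of f₁, …, f_k and let V be the ℝ-span of the monomials x^A of total degree j such that A is not equal to any of the leading multidegrees m.degree fᵢ. Then V and W are complementary inside the space of degree-j homogeneous polynomials: V ⊓ W = 0 and V ⊔ W = homogeneousSubmodule (Fin n) ℝ j. Equivalently, the monomials x^A (|A| = j, A not a leading multidegree of any fᵢ) together with f₁, …, f_k form a basis of the degree-j homogeneous polynomials, so these monomials map to a basis of the quotient by W. -/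
open MvPolynomial

/-- The leading multidegree of a multivariate polynomial with respect to a monomial
order: the largest exponent vector in the support, computed in the order's synonym type. -/
noncomputable def MonomialOrder.lmDegree {σ : Type*} (m : MonomialOrder σ) {R : Type*}
    [CommSemiring R] (f : MvPolynomial σ R) : σ →₀ ℕ :=
  m.toSyn.symm (f.support.sup fun d => m.toSyn d)

namespace MonomialOrder

variable {σ R : Type*} (m : MonomialOrder σ)

theorem lmDegree_eq_degree [CommSemiring R] (f : MvPolynomial σ R) :
    m.lmDegree f = m.degree f :=
  rfl

section Disjoint

variable [CommSemiring R] [NoZeroDivisors R] {ι : Type*} {f : ι → MvPolynomial σ R}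

/-- Among the `fᵢ` occurring in a combination, the one of largest leading degree contributes
the only nonzero coefficient at that degree. -/
theorem exists_degree_mem_support_of_mem_span (hf0 : ∀ i, f i ≠ 0)
    (hdist : Function.Injective fun i => m.degree (f i)) {p : MvPolynomial σ R}
    (hp : p ∈ Submodule.span R (Set.range f)) (hp0 : p ≠ 0) :
    ∃ i, m.degree (f i) ∈ p.support := by
  obtain ⟨c, rfl⟩ := Finsupp.mem_span_range_iff_exists_finsupp.mp hp
  have hc : c.support.Nonempty := by
    rw [Finsupp.support_nonempty_iff]
    rintro rfl
    exact hp0 Finsupp.sum_zero_index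
  obtain ⟨i₀, hi₀, hmax⟩ := c.support.exists_max_image (fun i => m.toSyn (m.degree (f i))) hc
  refine ⟨i₀, ?_⟩
  have hother : ∀ i ∈ c.support, i ≠ i₀ → c i * coeff (m.degree (f i₀)) (f i) = 0 := by
    intro i hi hne
    have hlt : m.toSyn (m.degree (f i)) < m.toSyn (m.degree (f i₀)) :=
      (hmax i hi).lt_of_ne fun h => hne (hdist (m.toSyn.injective h))
    rw [coeff_eq_zero_of_lt hlt, mul_zero]
  rw [mem_support_iff, Finsupp.sum, coeff_sum]
  simp only [coeff_smul, smul_eq_mul]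
  rw [Finset.sum_eq_single_of_mem i₀ hi₀ hother]
  exact mul_ne_zero (Finsupp.mem_support_iff.mp hi₀) (m.coeff_degree_ne_zero_iff.mpr (hf0 i₀))

theorem disjoint_restrictSupport_compl_span (hf0 : ∀ i, f i ≠ 0)
    (hdist : Function.Injective fun i => m.degree (f i)) :
    Disjoint (restrictSupport R (Set.range fun i => m.degree (f i))ᶜ)
      (Submodule.span R (Set.range f)) := by
  rw [Submodule.disjoint_def]
  intro p hpV hpW
  by_contra hp0
  obtain ⟨i, hi⟩ := m.exists_degree_mem_support_of_mem_span hf0 hdist hpW hp0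
  exact hpV hi ⟨i, rfl⟩

end Disjoint

section Spanning

variable [Field R] {s : Set (σ →₀ ℕ)}

theorem sub_leadingTerm_mem_restrictSupport {f : MvPolynomial σ R}
    (hf : f ∈ restrictSupport R s) :
    f - m.leadingTerm f ∈
      restrictSupport R {B | B ∈ s ∧ m.toSyn B < m.toSyn (m.degree f)} := by
  classical
  rw [mem_restrictSupport_iff] at hf ⊢
  intro B hB
  have hne : B ≠ m.degree f := by
    rintro rfl
    refine mem_support_iff.mp hB ?_
    rw [coeff_sub, leadingTerm, coeff_monomial, if_pos rfl, leadingCoeff, sub_self]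
  have hBf : B ∈ f.support := by
    rcases Finset.mem_union.mp (support_sub σ _ _ hB) with h | h
    · exact h
    · exact absurd (Finset.mem_singleton.mp (support_monomial_subset h)) hne
  exact ⟨hf hBf, (m.le_degree hBf).lt_of_ne fun h => hne (m.toSyn.injective h)⟩

/-- Triangularity: the monomial at the leading degree of `fᵢ` is `fᵢ` up to strictly
smaller monomials, so well-founded induction along `m` reaches every monomial of `s`. -/
theorem restrictSupport_le_sup_span {ι : Type*} {f : ι → MvPolynomial σ R} (hf0 : ∀ i, f i ≠ 0)
    (hfs : ∀ i, f i ∈ restrictSupport R s) :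
    restrictSupport R s ≤
      restrictSupport R (s \ Set.range fun i => m.degree (f i)) ⊔
        Submodule.span R (Set.range f) := by
  set T := restrictSupport R (s \ Set.range fun i => m.degree (f i)) ⊔
    Submodule.span R (Set.range f)
  suffices h : ∀ A ∈ s, monomial A (1 : R) ∈ T by
    rw [restrictSupport_eq_span, Submodule.span_le]
    rintro _ ⟨A, hA, rfl⟩
    exact h A hA
  intro A
  induction A using (InvImage.wf m.toSyn wellFounded_lt).induction with
  | _ A ih =>
  intro hA
  by_cases hAD : A ∈ Set.range fun i => m.degree (f i)
  · obtain ⟨i, rfl⟩ := hAD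
    have hlower : f i - m.leadingTerm (f i) ∈ T := by
      refine (?_ : restrictSupport R _ ≤ T) (m.sub_leadingTerm_mem_restrictSupport (hfs i))
      rw [restrictSupport_eq_span, Submodule.span_le]
      rintro _ ⟨B, ⟨hBs, hBlt⟩, rfl⟩
      exact ih B hBlt hBs
    have hfT : f i ∈ T := Submodule.mem_sup_right (Submodule.subset_span ⟨i, rfl⟩)
    have hmono : monomial (m.degree (f i)) (1 : R) =
        (m.leadingCoeff (f i))⁻¹ • (f i - (f i - m.leadingTerm (f i))) := by
      rw [sub_sub_cancel, leadingTerm, smul_monomial, smul_eq_mul,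
        inv_mul_cancel₀ (m.leadingCoeff_ne_zero_iff.mpr (hf0 i))]
    rw [hmono]
    exact T.smul_mem _ (T.sub_mem hfT hlower)
  · exact Submodule.mem_sup_left ((monomial_mem_restrictSupport R).mpr (Or.inl ⟨hA, hAD⟩))

end Spanning

end MonomialOrder

/-- **Basis of a complement via non-leading monomials.**
Fix a monomial order `m` on `MvPolynomial (Fin n) ℝ`, a degree `j`, and nonzero
polynomials `f 0, …, f (k-1)`, each homogeneous of degree `j`, with pairwise distinct
leading multidegrees.  Let `W` be the span of the `fᵢ` and `V` the span of the
monomials `x^A` of total degree `j` for which `A` is not a leading multidegree of any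
`fᵢ`.  Then `V` and `W` are complementary subspaces of the degree-`j` homogeneous
polynomials: `V ⊓ W = ⊥` and `V ⊔ W = homogeneousSubmodule (Fin n) ℝ j`. -/
theorem complement_basis_nonleading_monomials {n k : ℕ}
    (m : MonomialOrder (Fin n)) (j : ℕ)
    (f : Fin k → MvPolynomial (Fin n) ℝ)
    (hf0 : ∀ i, f i ≠ 0)
    (hfhom : ∀ i, f i ∈ homogeneousSubmodule (Fin n) ℝ j)
    (hdist : Function.Injective fun i => m.lmDegree (f i))
    (W : Submodule ℝ (MvPolynomial (Fin n) ℝ))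
    (hW : W = Submodule.span ℝ (Set.range f))
    (V : Submodule ℝ (MvPolynomial (Fin n) ℝ))
    (hV : V = Submodule.span ℝ
      { q : MvPolynomial (Fin n) ℝ | ∃ A : Fin n →₀ ℕ,
          (A.sum fun _ e => e) = j ∧ (∀ i, A ≠ m.lmDegree (f i)) ∧
          q = monomial A (1 : ℝ) }) :
    V ⊓ W = ⊥ ∧ V ⊔ W = homogeneousSubmodule (Fin n) ℝ j := by
  set s : Set (Fin n →₀ ℕ) := {d | d.degree = j}
  have hhom : homogeneousSubmodule (Fin n) ℝ j = restrictSupport ℝ s :=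
    homogeneousSubmodule_eq_finsupp_supported _ _ j
  have hV' : V = restrictSupport ℝ (s \ Set.range fun i => m.degree (f i)) := by
    rw [hV, restrictSupport_eq_span]
    congr 1
    ext q
    simp [s, m.lmDegree_eq_degree, Finsupp.degree_apply, Finsupp.sum, eq_comm (a := q), and_assoc, eq_comm (a := m.degree _)]
  rw [hhom] at hfhom ⊢
  subst hV' hW
  constructor
  · exact ((m.disjoint_restrictSupport_compl_span hf0 hdist).mono_left
      (restrictSupport_mono ℝ (Set.sdiff_subset_compl _ _))).eq_bot
  · refine le_antisymm (sup_le (restrictSupport_mono ℝ Set.sdiff_subset) ?_)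
      (m.restrictSupport_le_sup_span hf0 hfhom)
    exact Submodule.span_le.mpr (Set.range_subset_iff.mpr hfhom)
end

section
/- Casimir polynomials of the sl(2) Lie–Poisson structure: on MvPolynomial (Fin 3) ℝ with variables p = X 0, q = X 1, r = X 2, define the bracket {F, G} := r·(∂_p F·∂_q G − ∂_q F·∂_p G) − 2p·(∂_p F·∂_r G − ∂_r F·∂_p G) + 2q·(∂_q F·∂_r G − ∂_r F·∂_q G), where ∂_i = pderiv i. Then a polynomial F satisfies {F, G} = 0 for every G if and only if there is a one-variable polynomial u ∈ Polynomial ℝ with F = Polynomial.aeval (4·(X 0)·(X 1) + (X 2)^2) u; that is, the Casimir polynomials are exactly the polynomials in 4pq + r². -/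
open MvPolynomial

/-- The Lie–Poisson bracket of `sl(2,ℝ)` on `ℝ³` with coordinates
`p = X 0`, `q = X 1`, `r = X 2`:
`{F, G} = r(∂ₚF ∂_qG − ∂_qF ∂ₚG) − 2p(∂ₚF ∂ᵣG − ∂ᵣF ∂ₚG) + 2q(∂_qF ∂ᵣG − ∂ᵣF ∂_qG)`. -/
noncomputable def sl2Bracket (F G : MvPolynomial (Fin 3) ℝ) : MvPolynomial (Fin 3) ℝ :=
  X 2 * (pderiv 0 F * pderiv 1 G - pderiv 1 F * pderiv 0 G)
    - 2 * X 0 * (pderiv 0 F * pderiv 2 G - pderiv 2 F * pderiv 0 G)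
    + 2 * X 1 * (pderiv 1 F * pderiv 2 G - pderiv 2 F * pderiv 1 G)

/-! For fixed `G`, `F ↦ {F, G}` is a derivation, so it kills every polynomial in
`4pq + r²` as soon as it kills `4pq + r²`. Conversely, for a Casimir `F`, `{F, r} = 0` reads
`p ∂ₚF = q ∂_qF`, so only monomials `pᵃqᵃrᶜ` occur, and `{F, p} = 0` reads `2p ∂ᵣF = r ∂_qF`.
If `K` is the `p`-degree of `F`, the coefficient of `p^(K+1) q^K r^c` in the latter identity
shows that `F` has no monomial `pᴷqᴷr^(c+1)`. So the top `p`-degree part of `F` is a multiple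
of `(pq)ᴷ`; subtracting the matching multiple of `(4pq + r²)ᴷ` lowers the `p`-degree. -/

@[simp]
lemma Derivation.map_ofNat {R A M : Type*} [CommSemiring R] [CommSemiring A] [Algebra R A]
    [AddCommMonoid M] [Module A M] [Module R M] (D : Derivation R A M) (n : ℕ) [n.AtLeastTwo] :
    D (no_index (OfNat.ofNat n : A)) = 0 := by
  rw [← Nat.cast_ofNat]
  exact D.map_natCast n

section Coefficients

variable {σ R : Type*} [CommSemiring R]

lemma coeff_X_mul_pderiv_self (i : σ) (f : MvPolynomial σ R) (m : σ →₀ ℕ) :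
    coeff m (X i * pderiv i f) = coeff m f * m i := by
  classical
  rw [coeff_X_mul']
  split_ifs with hi
  · have hle : Finsupp.single i 1 ≤ m :=
      Finsupp.single_le_iff.2 (Nat.one_le_iff_ne_zero.2 (Finsupp.mem_support_iff.1 hi))
    rw [coeff_pderiv, tsub_add_cancel_of_le hle, Finsupp.tsub_apply, Finsupp.single_eq_same]
    norm_cast
    rw [Nat.sub_add_cancel (Finsupp.single_le_iff.1 hle)]
  · simp [Finsupp.notMem_support_iff.1 hi]

lemma coeff_eq_zero_of_degreeOf_lt {i : σ} {f : MvPolynomial σ R} {m : σ →₀ ℕ}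
    (h : degreeOf i f < m i) : coeff m f = 0 :=
  notMem_support_iff.1 fun hm => (monomial_le_degreeOf i hm).not_gt h

lemma degreeOf_pderiv_le (i j : σ) (f : MvPolynomial σ R) :
    degreeOf i (pderiv j f) ≤ degreeOf i f := by
  refine degreeOf_le_iff.2 fun m hm => ?_
  rw [mem_support_iff, coeff_pderiv] at hm
  calc m i ≤ (m + Finsupp.single j 1 : σ →₀ ℕ) i := by simp
    _ ≤ degreeOf i f := monomial_le_degreeOf i (mem_support_iff.2 (left_ne_zero_of_mul hm))

end Coefficients

noncomputable def sl2Casimir : MvPolynomial (Fin 3) ℝ := 4 * X 0 * X 1 + X 2 ^ 2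

def IsSl2Casimir (F : MvPolynomial (Fin 3) ℝ) : Prop := ∀ G, sl2Bracket F G = 0

noncomputable def sl2BracketDerivation (G : MvPolynomial (Fin 3) ℝ) :
    Derivation ℝ (MvPolynomial (Fin 3) ℝ) (MvPolynomial (Fin 3) ℝ) :=
  (X 2 * pderiv 1 G - 2 * X 0 * pderiv 2 G) • pderiv 0
    + (2 * X 1 * pderiv 2 G - X 2 * pderiv 0 G) • pderiv 1
    + (2 * X 0 * pderiv 0 G - 2 * X 1 * pderiv 1 G) • pderiv 2

lemma sl2BracketDerivation_apply (F G : MvPolynomial (Fin 3) ℝ) :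
    sl2BracketDerivation G F = sl2Bracket F G := by
  simp only [sl2BracketDerivation, sl2Bracket, Derivation.add_apply, Derivation.smul_apply,
    smul_eq_mul]
  ring

lemma sl2Bracket_sl2Casimir (G : MvPolynomial (Fin 3) ℝ) : sl2Bracket sl2Casimir G = 0 := by
  have h0 : pderiv 0 sl2Casimir = 4 * X 1 := by simp [sl2Casimir, pderiv_X, mul_comm]
  have h1 : pderiv 1 sl2Casimir = 4 * X 0 := by simp [sl2Casimir, pderiv_X]
  have h2 : pderiv 2 sl2Casimir = 2 * X 2 := by simp [sl2Casimir, pderiv_X]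
  rw [sl2Bracket, h0, h1, h2]
  ring

lemma sl2Bracket_X_zero (F : MvPolynomial (Fin 3) ℝ) :
    sl2Bracket F (X 0) = 2 * X 0 * pderiv 2 F - X 2 * pderiv 1 F := by
  simp only [sl2Bracket, pderiv_X_self, pderiv_X_of_ne, ne_eq, Fin.reduceEq, not_false_eq_true]
  ring

lemma sl2Bracket_X_two (F : MvPolynomial (Fin 3) ℝ) :
    sl2Bracket F (X 2) = 2 * (X 1 * pderiv 1 F - X 0 * pderiv 0 F) := by
  simp only [sl2Bracket, pderiv_X_self, pderiv_X_of_ne, ne_eq, Fin.reduceEq, not_false_eq_true]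
  ring

lemma isSl2Casimir_aeval (u : Polynomial ℝ) : IsSl2Casimir (Polynomial.aeval sl2Casimir u) := by
  intro G
  rw [← sl2BracketDerivation_apply, Derivation.map_aeval, sl2BracketDerivation_apply,
    sl2Bracket_sl2Casimir, smul_zero]

lemma degreeOf_sl2Casimir_pow_le (K : ℕ) : degreeOf 0 (sl2Casimir ^ K) ≤ K := by
  have h : degreeOf 0 sl2Casimir ≤ 1 := by
    rw [sl2Casimir, ← map_ofNat C 4]
    refine (degreeOf_add_le _ _ _).trans (max_le ?_ ?_)
    · rw [degreeOf_mul_X_of_ne _ (by decide)]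
      exact (degreeOf_C_mul_le _ _ _).trans (degreeOf_X_self 0).le
    · rw [degreeOf_X_pow_of_ne _ (by decide)]
      exact zero_le_one
  simpa using (degreeOf_pow_le 0 sl2Casimir K).trans (Nat.mul_le_mul_left K h)

lemma coeff_sl2Casimir_pow (K : ℕ) :
    coeff (Finsupp.single 0 K + Finsupp.single 1 K) (sl2Casimir ^ K) = 4 ^ K := by
  obtain ⟨g, hg⟩ := sub_dvd_pow_sub_pow sl2Casimir (4 * X 0 * X 1) K
  have hsplit : sl2Casimir ^ K = C (4 ^ K) * (X 0 ^ K * X 1 ^ K) + X 2 * (X 2 * g) := by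
    rw [show sl2Casimir - 4 * X 0 * X 1 = X 2 ^ 2 by rw [sl2Casimir]; ring] at hg
    rw [map_pow, map_ofNat C 4]
    linear_combination hg
  rw [hsplit, coeff_add, coeff_C_mul, X_pow_eq_monomial, X_pow_eq_monomial, monomial_mul,
    coeff_monomial, if_pos rfl, coeff_X_mul', if_neg (by simp)]
  ring

namespace IsSl2Casimir

variable {F F' : MvPolynomial (Fin 3) ℝ}

lemma sub (hF : IsSl2Casimir F) (hF' : IsSl2Casimir F') : IsSl2Casimir (F - F') := by
  intro G
  rw [← sl2BracketDerivation_apply, map_sub, sl2BracketDerivation_apply,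
    sl2BracketDerivation_apply, hF, hF', sub_zero]

lemma coeff_eq_zero_of_ne (hF : IsSl2Casimir F) {m : Fin 3 →₀ ℕ} (hm : m 0 ≠ m 1) :
    coeff m F = 0 := by
  have h := congrArg (coeff m) (hF (X 2))
  rw [sl2Bracket_X_two, ← map_ofNat C 2, coeff_C_mul, coeff_sub, coeff_X_mul_pderiv_self,
    coeff_X_mul_pderiv_self, coeff_zero, ← mul_sub] at h
  have : (m 1 : ℝ) - m 0 ≠ 0 := sub_ne_zero.2 (by exact_mod_cast hm.symm)
  simpa [this] using h

lemma coeff_add_single_two (hF : IsSl2Casimir F) {m : Fin 3 →₀ ℕ} (hm : degreeOf 0 F ≤ m 0) :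
    coeff (m + Finsupp.single 2 1) F = 0 := by
  have h := congrArg (coeff (Finsupp.single 0 1 + m : Fin 3 →₀ ℕ)) (hF (X 0))
  have hdeg : degreeOf 0 (X 2 * pderiv 1 F) < (Finsupp.single 0 1 + m : Fin 3 →₀ ℕ) 0 := by
    rw [mul_comm, degreeOf_mul_X_of_ne _ (by decide)]
    have := degreeOf_pderiv_le 0 1 F
    simp only [Finsupp.add_apply, Finsupp.single_eq_same]
    omega
  rw [sl2Bracket_X_zero, coeff_sub, coeff_eq_zero_of_degreeOf_lt hdeg, mul_assoc, ← map_ofNat C 2,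
    coeff_C_mul, coeff_X_mul, coeff_pderiv, coeff_zero, sub_zero] at h
  have : (m 2 : ℝ) + 1 ≠ 0 := by positivity
  simpa [this] using h

lemma coeff_eq_zero_of_degreeOf_le (hF : IsSl2Casimir F) {m : Fin 3 →₀ ℕ}
    (hm : degreeOf 0 F ≤ m 0) (hne : m ≠ Finsupp.single 0 (m 0) + Finsupp.single 1 (m 0)) :
    coeff m F = 0 := by
  by_cases h01 : m 0 = m 1
  · have h2 : m 2 ≠ 0 := fun h2 => hne <| by
      ext j; fin_cases j <;> simp [h01, h2]
    have hle : Finsupp.single 2 1 ≤ m := Finsupp.single_le_iff.2 (Nat.one_le_iff_ne_zero.2 h2)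
    rw [← tsub_add_cancel_of_le hle]
    exact hF.coeff_add_single_two (by simpa using hm)
  · exact hF.coeff_eq_zero_of_ne h01

lemma exists_coeff_sub_aeval_eq_zero (hF : IsSl2Casimir F) {K : ℕ} (hdeg : degreeOf 0 F ≤ K) :
    ∃ u : Polynomial ℝ, ∀ m : Fin 3 →₀ ℕ, K ≤ m 0 →
      coeff m (F - Polynomial.aeval sl2Casimir u) = 0 := by
  set c := coeff (Finsupp.single 0 K + Finsupp.single 1 K) F / 4 ^ K
  refine ⟨Polynomial.C c * Polynomial.X ^ K, fun m hm => ?_⟩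
  have haeval : Polynomial.aeval sl2Casimir (Polynomial.C c * Polynomial.X ^ K)
      = C c * sl2Casimir ^ K := by
    simp [MvPolynomial.algebraMap_eq]
  have hF' := hF.sub (isSl2Casimir_aeval (Polynomial.C c * Polynomial.X ^ K))
  rw [haeval] at hF' ⊢
  have hdeg' : degreeOf 0 (F - C c * sl2Casimir ^ K) ≤ K :=
    (degreeOf_sub_le _ _ _).trans
      (max_le hdeg ((degreeOf_C_mul_le _ _ _).trans (degreeOf_sl2Casimir_pow_le K)))
  obtain hK | hlt := hm.eq_or_lt
  · by_cases hdiag : m = Finsupp.single 0 K + Finsupp.single 1 K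
    · rw [hdiag, coeff_sub, coeff_C_mul, coeff_sl2Casimir_pow, div_mul_cancel₀ _ (by positivity),
        sub_self]
    · exact hF'.coeff_eq_zero_of_degreeOf_le (hK ▸ hdeg') (hK ▸ hdiag)
  · exact coeff_eq_zero_of_degreeOf_lt (hdeg'.trans_lt hlt)

lemma exists_eq_aeval_of_degreeOf_le (hF : IsSl2Casimir F) {K : ℕ} (hdeg : degreeOf 0 F ≤ K) :
    ∃ u : Polynomial ℝ, F = Polynomial.aeval sl2Casimir u := by
  induction K generalizing F with
  | zero =>
    obtain ⟨u, hu⟩ := hF.exists_coeff_sub_aeval_eq_zero hdeg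
    exact ⟨u, sub_eq_zero.1 (eq_zero_iff.2 fun m => hu m (Nat.zero_le _))⟩
  | succ k ih =>
    obtain ⟨u, hu⟩ := hF.exists_coeff_sub_aeval_eq_zero hdeg
    have hdeg' : degreeOf 0 (F - Polynomial.aeval sl2Casimir u) ≤ k :=
      degreeOf_le_iff.2 fun m hm => not_lt.1 fun h => mem_support_iff.1 hm (hu m h)
    obtain ⟨v, hv⟩ := ih (hF.sub (isSl2Casimir_aeval u)) hdeg'
    exact ⟨v + u, by rw [map_add, ← hv, sub_add_cancel]⟩

end IsSl2Casimir

/-- **Casimir polynomials of the `sl(2)` Lie–Poisson structure.**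
A polynomial `F` satisfies `{F, G} = 0` for every `G` if and only if `F` is a
polynomial in `4pq + r²`, i.e. `F = u(4·X 0·X 1 + (X 2)²)` for some one-variable
polynomial `u`. -/
theorem sl2_casimir_iff (F : MvPolynomial (Fin 3) ℝ) :
    (∀ G : MvPolynomial (Fin 3) ℝ, sl2Bracket F G = 0)
      ↔ ∃ u : Polynomial ℝ,
          F = Polynomial.aeval (4 * X 0 * X 1 + X 2 ^ 2 : MvPolynomial (Fin 3) ℝ) u :=
  ⟨fun hF => IsSl2Casimir.exists_eq_aeval_of_degreeOf_le hF le_rfl,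
    fun ⟨u, hu⟩ => hu ▸ isSl2Casimir_aeval u⟩
end

section
/- Extremality of the top cochain: let n ≥ 1, h ≥ 1, ℓ ≥ 1, and put d j := C(n−1+j, j), m₀ := Σ_{j=1}^{ℓ} d j, and w₀ := Σ_{j=1}^{ℓ} (j−2+h)·(d j) (an integer). Suppose k : ℕ → ℕ is finitely supported with k 0 = 0, k j ≤ d j for all j ≥ 1, and Σ_j (j−2+h)·(k j) = w₀. Then Σ_j k j ≤ m₀; and if Σ_j k j = m₀ then k j = d j for 1 ≤ j ≤ ℓ and k j = 0 for j > ℓ. Consequently, for an h-homogeneous Poisson structure the cochain spaces of weight w₀ vanish in all degrees m > m₀, and the degree-m₀ cochain space of weight w₀ is the single one-dimensional summand Λ^{d₁}S'₁ ⊗ ⋯ ⊗ Λ^{d_ℓ}S'_ℓ. -/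
/-- **Extremality of the top cochain.**
Let `n ≥ 1`, `h ≥ 1`, `ℓ ≥ 1`, and put `d j := C(n−1+j, j)`,
`m₀ := ∑_{j=1}^{ℓ} d j`, `w₀ := ∑_{j=1}^{ℓ} (j−2+h)·(d j)` (an integer).
If `k : ℕ →₀ ℕ` satisfies `k 0 = 0`, `k j ≤ d j` for all `j ≥ 1`, and
`∑_j (j−2+h)·(k j) = w₀`, then `∑_j k j ≤ m₀`; and if `∑_j k j = m₀` then
`k j = d j` for `1 ≤ j ≤ ℓ` and `k j = 0` for `j > ℓ`.  Hence for an
`h`-homogeneous Poisson structure the weight-`w₀` cochain spaces vanish in degrees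
`m > m₀`, and in degree `m₀` there is the single summand
`Λ^{d₁}S'₁ ⊗ ⋯ ⊗ Λ^{d_ℓ}S'_ℓ`, which is one-dimensional. -/
theorem top_cochain_extremality (n h ℓ : ℕ) (hn : 1 ≤ n) (hh : 1 ≤ h) (hℓ : 1 ≤ ℓ)
    (k : ℕ →₀ ℕ) (hk0 : k 0 = 0)
    (hk : ∀ j, 1 ≤ j → k j ≤ Nat.choose (n - 1 + j) j)
    (hw : (k.sum fun j v => ((j : ℤ) - 2 + h) * v)
        = ∑ j ∈ Finset.Icc 1 ℓ, ((j : ℤ) - 2 + h) * Nat.choose (n - 1 + j) j) :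
    (k.sum fun _ v => v) ≤ (∑ j ∈ Finset.Icc 1 ℓ, Nat.choose (n - 1 + j) j) ∧
    ((k.sum fun _ v => v) = (∑ j ∈ Finset.Icc 1 ℓ, Nat.choose (n - 1 + j) j) →
      (∀ j ∈ Finset.Icc 1 ℓ, k j = Nat.choose (n - 1 + j) j) ∧
      (∀ j, ℓ < j → k j = 0)) := by
  classical
  set T : Finset ℕ := k.support ∪ Finset.Icc 1 ℓ with hT
  have hsub : Finset.Icc 1 ℓ ⊆ T := Finset.subset_union_right
  have hksub : k.support ⊆ T := Finset.subset_union_left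
  have hsum1 : (k.sum fun j v => ((j : ℤ) - 2 + h) * v)
      = ∑ j ∈ T, ((j : ℤ) - 2 + h) * (k j : ℤ) :=
    Finsupp.sum_of_support_subset k hksub _ (by intros; simp)
  have hsum2 : (k.sum fun _ v => v) = ∑ j ∈ T, k j :=
    Finsupp.sum_of_support_subset k hksub _ (by intros; rfl)
  -- notation
  set S₁ : ℤ := ∑ j ∈ Finset.Icc 1 ℓ, ((Nat.choose (n - 1 + j) j : ℤ) - k j) with hS1
  set S₂ : ℤ := ∑ j ∈ T \ Finset.Icc 1 ℓ, (k j : ℤ) with hS2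
  have hS1nn : 0 ≤ S₁ := by
    apply Finset.sum_nonneg
    intro j hj
    have h1 := (Finset.mem_Icc.mp hj).1
    have := hk j h1
    simp only [sub_nonneg]
    exact_mod_cast this
  have hS2nn : 0 ≤ S₂ := Finset.sum_nonneg (fun j _ => by positivity)
  -- weight balance: ∑_{T\Icc} w j * k j = ∑_{Icc} w j * (d j - k j)
  have hbal : ∑ j ∈ T \ Finset.Icc 1 ℓ, ((j : ℤ) - 2 + h) * (k j : ℤ)
      = ∑ j ∈ Finset.Icc 1 ℓ, ((j : ℤ) - 2 + h) * ((Nat.choose (n - 1 + j) j : ℤ) - k j) := by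
    have hsp : ∑ j ∈ T \ Finset.Icc 1 ℓ, ((j : ℤ) - 2 + h) * (k j : ℤ)
        + ∑ j ∈ Finset.Icc 1 ℓ, ((j : ℤ) - 2 + h) * (k j : ℤ)
        = ∑ j ∈ T, ((j : ℤ) - 2 + h) * (k j : ℤ) := Finset.sum_sdiff hsub
    have hexp : ∑ j ∈ Finset.Icc 1 ℓ, ((j : ℤ) - 2 + h) * ((Nat.choose (n - 1 + j) j : ℤ) - k j)
        = ∑ j ∈ Finset.Icc 1 ℓ, ((j : ℤ) - 2 + h) * (Nat.choose (n - 1 + j) j : ℤ)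
          - ∑ j ∈ Finset.Icc 1 ℓ, ((j : ℤ) - 2 + h) * (k j : ℤ) := by
      rw [← Finset.sum_sub_distrib]
      exact Finset.sum_congr rfl (fun j _ => mul_sub _ _ _)
    rw [hsum1] at hw
    linarith [hw, hsp, hexp]
  -- lower bound on the outer part
  have hB : ((ℓ : ℤ) - 1 + h) * S₂ ≤ ∑ j ∈ T \ Finset.Icc 1 ℓ, ((j : ℤ) - 2 + h) * (k j : ℤ) := by
    rw [hS2, Finset.mul_sum]
    apply Finset.sum_le_sum
    intro j hj
    rcases Nat.eq_zero_or_pos j with h0 | hpos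
    · subst h0; simp [hk0]
    · have hj' : ℓ < j := by
        rcases Finset.mem_sdiff.mp hj with ⟨_, hnot⟩
        by_contra hc
        exact hnot (Finset.mem_Icc.mpr ⟨hpos, le_of_not_gt hc⟩)
      have hle : ((ℓ : ℤ) - 1 + h) ≤ (j : ℤ) - 2 + h := by
        have : (ℓ : ℤ) + 1 ≤ j := by exact_mod_cast hj'
        linarith
      exact mul_le_mul_of_nonneg_right hle (by positivity)
  -- upper bound on the inner part
  have hC : ∑ j ∈ Finset.Icc 1 ℓ, ((j : ℤ) - 2 + h) * ((Nat.choose (n - 1 + j) j : ℤ) - k j)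
      ≤ ((ℓ : ℤ) - 2 + h) * S₁ := by
    rw [hS1, Finset.mul_sum]
    apply Finset.sum_le_sum
    intro j hj
    obtain ⟨h1, h2⟩ := Finset.mem_Icc.mp hj
    have hnn : (0 : ℤ) ≤ (Nat.choose (n - 1 + j) j : ℤ) - k j := by
      have := hk j h1
      simp only [sub_nonneg]; exact_mod_cast this
    apply mul_le_mul_of_nonneg_right _ hnn
    have : (j : ℤ) ≤ ℓ := by exact_mod_cast h2
    linarith
  have hCpos : (0 : ℤ) < (ℓ : ℤ) - 1 + h := by
    have h1 : (1 : ℤ) ≤ ℓ := by exact_mod_cast hℓ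
    have h2 : (1 : ℤ) ≤ h := by exact_mod_cast hh
    linarith
  have hchain : ((ℓ : ℤ) - 1 + h) * S₂ ≤ ((ℓ : ℤ) - 2 + h) * S₁ := by
    calc ((ℓ : ℤ) - 1 + h) * S₂ ≤ _ := hB
      _ = _ := hbal
      _ ≤ _ := hC
  have hS21 : S₂ ≤ S₁ := by
    have : ((ℓ : ℤ) - 1 + h) * S₂ ≤ ((ℓ : ℤ) - 1 + h) * S₁ := by nlinarith
    exact le_of_mul_le_mul_left this hCpos
  -- sum identities over ℤ
  have hsplitK : (∑ j ∈ T, (k j : ℤ))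
      = S₂ + ∑ j ∈ Finset.Icc 1 ℓ, (k j : ℤ) := (Finset.sum_sdiff hsub).symm
  have hS1id : S₁ + ∑ j ∈ Finset.Icc 1 ℓ, (k j : ℤ)
      = ∑ j ∈ Finset.Icc 1 ℓ, (Nat.choose (n - 1 + j) j : ℤ) := by
    rw [hS1, ← Finset.sum_add_distrib]
    exact Finset.sum_congr rfl (fun j _ => by ring)
  have hZle : (∑ j ∈ T, (k j : ℤ)) ≤ ∑ j ∈ Finset.Icc 1 ℓ, (Nat.choose (n - 1 + j) j : ℤ) := by
    rw [hsplitK, ← hS1id]; linarith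
  have hNle : (∑ j ∈ T, k j) ≤ ∑ j ∈ Finset.Icc 1 ℓ, Nat.choose (n - 1 + j) j := by
    have := hZle
    push_cast at this
    exact_mod_cast this
  constructor
  · rw [hsum2]; exact hNle
  · intro heq
    rw [hsum2] at heq
    have hZeq : (∑ j ∈ T, (k j : ℤ)) = ∑ j ∈ Finset.Icc 1 ℓ, (Nat.choose (n - 1 + j) j : ℤ) := by
      exact_mod_cast congrArg (Nat.cast : ℕ → ℤ) heq
    have hSeq : S₂ = S₁ := by
      rw [hsplitK, ← hS1id] at hZeq; linarith
    have hS10 : S₁ = 0 := by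
      rw [hSeq] at hchain; nlinarith
    have hS20 : S₂ = 0 := by rw [hSeq, hS10]
    constructor
    · intro j hj
      have hterm : ∀ i ∈ Finset.Icc 1 ℓ, ((Nat.choose (n - 1 + i) i : ℤ) - k i) = 0 := by
        apply (Finset.sum_eq_zero_iff_of_nonneg ?_).mp hS10
        intro i hi
        have := hk i (Finset.mem_Icc.mp hi).1
        simp only [sub_nonneg]; exact_mod_cast this
      have := hterm j hj
      have h2 : (k j : ℤ) = (Nat.choose (n - 1 + j) j : ℤ) := by linarith
      exact_mod_cast h2
    · intro j hj
      by_contra hne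
      have hmem : j ∈ T \ Finset.Icc 1 ℓ := by
        refine Finset.mem_sdiff.mpr ⟨hksub (Finsupp.mem_support_iff.mpr hne), ?_⟩
        intro hc
        exact absurd (Finset.mem_Icc.mp hc).2 (not_le.mpr hj)
      have hterm : ∀ i ∈ T \ Finset.Icc 1 ℓ, (k i : ℤ) = 0 := by
        apply (Finset.sum_eq_zero_iff_of_nonneg ?_).mp hS20
        intro i _; positivity
      have := hterm j hmem
      exact hne (by exact_mod_cast this)
end

section
/- Vanishing of the Euler characteristic for homogeneity h = 1: let n ≥ 1 and w : ℕ. Let K be the (finite) set of finitely supported functions k : ℕ → ℕ such that k 0 = 0, k j ≤ C(n−1+j, j) for every j ≥ 1, and Σ_j j·(k j) = w + Σ_j (k j) (equivalently Σ_j (j−1)·k j = w). Then Σ_{k ∈ K} (−1)^{Σ_j k j} · Π_j C( C(n−1+j, j), k j ) = 0 in ℤ. In cohomological terms: for every 1-homogeneous Poisson structure on ℝⁿ and every weight w, the alternating sum Σ_m (−1)^m dim C̄ᵐ_w of the cochain dimensions — hence the Euler characteristic of the weight-w cohomology — is zero. -/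
/-! The weight `∑ (j - 1) * k j` does not see `k 1`, the number of linear factors. Hence the
index set is the product of its slice `k 1 = 0` with `{0, …, d 1}`, the summand factors
accordingly, and the whole sum carries the factor
`∑_{a ≤ d 1} (-1)^a C(d 1, a) = (1 - 1)^(d 1)`, which vanishes because
`d 1 = C(n - 1 + 1, 1) ≠ 0`. -/

open Finset

namespace Finsupp

variable {ι : Type*}

@[to_additive]
theorem prod_update_eq_mul_prod_erase {M N : Type*} [Zero M] [CommMonoid N] (k : ι →₀ M)
    (i : ι) (a : M) (g : ι → M → N) (hg : ∀ j, g j 0 = 1) :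
    (k.update i a).prod g = g i a * (k.erase i).prod g := by
  rw [← mul_prod_erase' _ i g hg, erase_update_eq_erase]
  classical
  simp [update_apply]

theorem sum_eq_sum_filter_mul_sum_range_of_update_mem_iff {R : Type*} [CommSemiring R]
    (F : Finset (ι →₀ ℕ)) (i : ι) (N : ℕ)
    (hF : ∀ (k : ι →₀ ℕ) a, k.update i a ∈ F ↔ k.erase i ∈ F ∧ a ≤ N)
    (f : (ι →₀ ℕ) → R) (φ : ℕ → R)
    (hf : ∀ (k : ι →₀ ℕ) a, f (k.update i a) = f (k.erase i) * φ a) :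
    ∑ k ∈ F, f k = (∑ k ∈ F with k i = 0, f k) * ∑ a ∈ range (N + 1), φ a := by
  have erase_eq_self {k : ι →₀ ℕ} (hk : k i = 0) : k.erase i = k := by
    rw [erase_eq_update_zero, ← hk, update_self]
  rw [sum_mul_sum, ← sum_product']
  refine sum_nbij' (fun k => (k.erase i, k i)) (fun p => p.1.update i p.2) ?_ ?_ ?_ ?_ ?_
  · intro k hk
    obtain ⟨herase, hle⟩ := (hF k (k i)).1 (by rwa [update_self])
    simpa [herase, Nat.lt_succ_iff] using hle
  · rintro ⟨k, a⟩ hp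
    simp only [mem_product, mem_filter, mem_range] at hp
    rw [hF, erase_eq_self hp.1.2]
    exact ⟨hp.1.1, by omega⟩
  · intro k _
    simp
  · rintro ⟨k, a⟩ hp
    simp only [mem_product, mem_filter] at hp
    classical
    simp [erase_eq_self hp.1.2, update_apply]
  · intro k _
    conv_lhs => rw [← update_self k i]
    exact hf k (k i)

end Finsupp

/-- `k j` counts the wedge factors of polynomial degree `j` in a cochain of `ḡ`, bounded by the
number `d j` of degree-`j` monomials; the last condition is `∑ (j - 1) * k j = w` written without
truncated subtraction. -/
def cochainIndices (d : ℕ → ℕ) (w : ℕ) : Set (ℕ →₀ ℕ) :=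
  {k | k 0 = 0 ∧ (∀ j, 1 ≤ j → k j ≤ d j) ∧
    (k.sum fun j v => j * v) = w + k.sum fun _ v => v}

namespace cochainIndices

variable {d : ℕ → ℕ} {w : ℕ}

theorem update_one_mem_iff (k : ℕ →₀ ℕ) (a : ℕ) :
    k.update 1 a ∈ cochainIndices d w ↔ k.erase 1 ∈ cochainIndices d w ∧ a ≤ d 1 := by
  have bound_iff : (∀ j, 1 ≤ j → k.update 1 a j ≤ d j) ↔
      (∀ j, 1 ≤ j → k.erase 1 j ≤ d j) ∧ a ≤ d 1 := by
    classical
    constructor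
    · intro h
      refine ⟨fun j hj => ?_, by simpa using h 1 le_rfl⟩
      rcases eq_or_ne j 1 with rfl | hj1
      · simp
      · simpa [hj1] using h j hj
    · rintro ⟨h, ha⟩ j hj
      rcases eq_or_ne j 1 with rfl | hj1
      · simpa using ha
      · simpa [hj1] using h j hj
  simp only [cochainIndices, Set.mem_ofPred_eq, bound_iff,
    Finsupp.sum_update_eq_add_sum_erase k 1 a (fun j v : ℕ => j * v) (fun j => mul_zero j),
    Finsupp.sum_update_eq_add_sum_erase k 1 a (fun _ v : ℕ => v) (fun _ => rfl)]
  classical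
  simp only [Finsupp.update_apply, zero_ne_one, ↓reduceIte, one_mul, ne_eq, not_false_eq_true,
    Finsupp.erase_ne]
  rw [show ∀ x y : ℕ, a + x = w + (a + y) ↔ x = w + y from fun x y => by omega]
  tauto

theorem sum_pred_mul_eq {k : ℕ →₀ ℕ} (hk : k ∈ cochainIndices d w) :
    (k.sum fun j v => (j - 1) * v) = w := by
  obtain ⟨hk0, -, hweight⟩ := hk
  have split : (k.sum fun j v => j * v) = (k.sum fun _ v => v) + k.sum fun j v => (j - 1) * v := by
    rw [← Finsupp.sum_add]
    refine Finsupp.sum_congr fun j hj => ?_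
    have : j ≠ 0 := by rintro rfl; exact Finsupp.mem_support_iff.mp hj hk0
    rw [← one_add_mul, Nat.add_sub_cancel' (Nat.one_le_iff_ne_zero.mpr this)]
  omega

theorem apply_eq_zero_of_add_two_le {k : ℕ →₀ ℕ} (hk : k ∈ cochainIndices d w) {j : ℕ}
    (hj : w + 2 ≤ j) : k j = 0 := by
  by_contra hkj
  have : (j - 1) * k j ≤ w := by
    rw [← sum_pred_mul_eq hk]
    exact Finset.single_le_sum (f := fun i => (i - 1) * k i) (fun _ _ => Nat.zero_le _)
      (Finsupp.mem_support_iff.mpr hkj)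
  have : j - 1 ≤ (j - 1) * k j := Nat.le_mul_of_pos_right _ (Nat.pos_of_ne_zero hkj)
  omega

theorem finite (d : ℕ → ℕ) (w : ℕ) : (cochainIndices d w).Finite := by
  classical
  refine (Set.finite_Iic (Finsupp.indicator (range (w + 2)) fun j _ => d j)).subset ?_
  intro k hk
  simp only [Set.mem_Iic, Finsupp.le_def, Finsupp.indicator_apply, mem_range]
  intro j
  split_ifs with hj
  · rcases Nat.eq_zero_or_pos j with rfl | hj0
    · simp [hk.1]
    · exact hk.2.1 j hj0
  · simp [apply_eq_zero_of_add_two_le hk (not_lt.mp hj)]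

theorem neg_one_pow_sum_mul_prod_choose_update (k : ℕ →₀ ℕ) (i a : ℕ) :
    (-1 : ℤ) ^ ((k.update i a).sum fun _ v => v) *
        ((k.update i a).prod fun j v => ((d j).choose v : ℤ)) =
      (-1 : ℤ) ^ ((k.erase i).sum fun _ v => v) *
          ((k.erase i).prod fun j v => ((d j).choose v : ℤ)) *
        ((-1) ^ a * (d i).choose a) := by
  rw [Finsupp.sum_update_eq_add_sum_erase _ _ _ _ fun _ => rfl,
    Finsupp.prod_update_eq_mul_prod_erase _ _ _ _ fun _ => by simp, pow_add]
  ring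

theorem sum_neg_one_pow_mul_prod_choose_eq_zero (hd : d 1 ≠ 0) :
    ∑ k ∈ (finite d w).toFinset,
      (-1 : ℤ) ^ (k.sum fun _ v => v) * (k.prod fun j v => ((d j).choose v : ℤ)) = 0 := by
  rw [Finsupp.sum_eq_sum_filter_mul_sum_range_of_update_mem_iff _ 1 (d 1)
      (by simpa using update_one_mem_iff) _ _
      fun k a => neg_one_pow_sum_mul_prod_choose_update k 1 a,
    Int.alternating_sum_range_choose_of_ne hd, mul_zero]

end cochainIndices

theorem euler_characteristic_zero_h_one_general (n : ℕ) (w : ℕ) :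
    ∃ hK : {k : ℕ →₀ ℕ | k 0 = 0 ∧ (∀ j, 1 ≤ j → k j ≤ Nat.choose (n - 1 + j) j) ∧
        (k.sum fun j v => j * v) = w + (k.sum fun _ v => v)}.Finite,
      ∑ k ∈ hK.toFinset,
        (-1 : ℤ) ^ (k.sum fun _ v => v) *
          (k.prod fun j v => (Nat.choose (Nat.choose (n - 1 + j) j) v : ℤ)) = 0 :=
  ⟨cochainIndices.finite _ w, cochainIndices.sum_neg_one_pow_mul_prod_choose_eq_zero (by simp)⟩

/-- **Vanishing of the Euler characteristic for homogeneity `h = 1`.**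
Let `n ≥ 1` and `w : ℕ`.  The set `K` of finitely supported `k : ℕ → ℕ` with
`k 0 = 0`, `k j ≤ C(n−1+j, j)` for all `j ≥ 1`, and `∑_j j·(k j) = w + ∑_j k j`
(i.e. `∑_j (j−1)·k j = w`) is finite, and
`∑_{k ∈ K} (−1)^{∑_j k j} · ∏_j C(C(n−1+j, j), k j) = 0` in `ℤ`.
Cohomologically: for every 1-homogeneous Poisson structure on `ℝⁿ` and every weight
`w`, the Euler characteristic `∑_m (−1)^m dim C̄ᵐ_w` of the weight-`w` complex is
zero. -/
theorem euler_characteristic_zero_h_one (n : ℕ) (hn : 1 ≤ n) (w : ℕ) :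
    ∃ hK : {k : ℕ →₀ ℕ | k 0 = 0 ∧ (∀ j, 1 ≤ j → k j ≤ Nat.choose (n - 1 + j) j) ∧
        (k.sum fun j v => j * v) = w + (k.sum fun _ v => v)}.Finite,
      ∑ k ∈ hK.toFinset,
        (-1 : ℤ) ^ (k.sum fun _ v => v) *
          (k.prod fun j v => (Nat.choose (Nat.choose (n - 1 + j) j) v : ℤ)) = 0 :=
  euler_characteristic_zero_h_one_general n w
end

section
/- Determinant formula for the sp(2,ℝ) kernel matrix: let Ω : ℕ and set φ(i) := 4Ω + 2 − 4i and ψ(i) := 4Ω − 4i (as integers). Let M be the (2Ω+1)×(2Ω+1) integer matrix with block structure: for rows 0 ≤ i ≤ Ω (first block) the entries are M[i][i'] = 1 if i' = i (0 ≤ i' ≤ Ω), and in the last Ω columns (indexed by 0 ≤ t ≤ Ω−1 as column Ω+1+t) M[i][Ω+1+t] = −(i+1) if t = i, M[i][Ω+1+t] = φ(i) if t = i−1, and 0 otherwise; for rows Ω+1 ≤ Ω+1+i ≤ 2Ω (second block, 0 ≤ i ≤ Ω−1) the entries are M[Ω+1+i][i] = ψ(i), M[Ω+1+i][i+1] = −(i+1),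 all other entries 0 (in particular the lower-right Ω×Ω block is zero). Then det M = Ω! · Σ_{j=1}^{Ω+1} ( Π_{i=0}^{j−2} ψ(i) ) · ( Π_{i=j}^{Ω} φ(i) ). -/
/-- The `(2Ω+1) × (2Ω+1)` integer matrix encoding the linear equations
`γ_{[i,i]} + φ(i)·P_{i−1} − (i+1)·P_i = 0` (rows `0 ≤ i ≤ Ω`) and
`ψ(i)·γ_{[i,i]} − (i+1)·γ_{[i+1,i+1]} = 0` (rows `Ω+1 ≤ Ω+1+i ≤ 2Ω`) in the
unknowns `γ_{[0,0]},…,γ_{[Ω,Ω]}, P_0,…,P_{Ω−1}`, where `φ(i) = 4Ω+2−4i` and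
`ψ(i) = 4Ω−4i`.  The upper-left `(Ω+1) × (Ω+1)` block is the identity, the
lower-right `Ω × Ω` block is zero. -/
def spKernelMatrix (Ω : ℕ) : Matrix (Fin (2 * Ω + 1)) (Fin (2 * Ω + 1)) ℤ :=
  fun i i' =>
    if i.val ≤ Ω then
      if i'.val ≤ Ω then (if i'.val = i.val then 1 else 0)
      else
        if i'.val - (Ω + 1) = i.val then -((i.val : ℤ) + 1)
        else if i'.val - (Ω + 1) + 1 = i.val then 4 * (Ω : ℤ) + 2 - 4 * (i.val : ℤ)
        else 0
    else
      if i'.val = i.val - (Ω + 1) then 4 * (Ω : ℤ) - 4 * ((i.val - (Ω + 1) : ℕ) : ℤ)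
      else if i'.val = i.val - (Ω + 1) + 1 then -(((i.val - (Ω + 1) : ℕ) : ℤ) + 1)
      else 0

/-!
Ordering the unknowns as `(γ, P)` puts `M` in the block form `[[1, B], [C, 0]]` with `C`
upper and `B` lower bidiagonal, so `det M = det (-(C * B))` (Schur complement). A product of
bidiagonal matrices is tridiagonal, and its determinant (a continuant) obeys the same three-term
recursion as `∑ⱼ (∏_{k<j} xₖ) (∏_{j≤k<n} yₖ)`, where `xₖ` and `yₖ` are the products of the
diagonal, resp. off-diagonal, entries of the two factors in position `k`; this is Cauchy–Binet,
the `j`-th term being the product of the two maximal minors omitting index `j`. For `M` one gets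
`xₖ = (k+1) ψ(k)` and `yₖ = (k+1) φ(k+1)`, and the factors `k+1` multiply to `Ω!`.
-/

namespace Finset

variable {R : Type*} [CommSemiring R]

theorem sum_prod_range_mul_prod_Ico_succ (x y : ℕ → R) (n : ℕ) :
    ∑ j ∈ range (n + 2), (∏ k ∈ range j, x k) * ∏ k ∈ Ico j (n + 1), y k
      = ∏ k ∈ range (n + 1), x k
        + (∑ j ∈ range (n + 1), (∏ k ∈ range j, x k) * ∏ k ∈ Ico j n, y k) * y n := by
  rw [sum_range_succ, Ico_self, prod_empty, mul_one, add_comm, sum_mul]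
  congr 1
  refine sum_congr rfl fun j hj => ?_
  rw [prod_Ico_succ_top (by simpa [Nat.lt_succ_iff] using hj), mul_assoc]

theorem sum_Icc_prod_range_mul_prod_Icc (f g : ℕ → R) (n : ℕ) :
    ∑ j ∈ Icc 1 (n + 1), (∏ i ∈ range (j - 1), f i) * ∏ i ∈ Icc j n, g i
      = ∑ j ∈ range (n + 1), (∏ i ∈ range j, f i) * ∏ i ∈ Ico j n, g (i + 1) := by
  rw [← Ico_add_one_right_eq_Icc, sum_Ico_eq_sum_range]
  refine sum_congr (by simp) fun j _ => ?_
  rw [← Ico_add_one_right_eq_Icc, prod_Ico_add', add_tsub_cancel_left, add_comm 1 j]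

end Finset

open Finset

namespace Matrix

variable {R : Type*} [CommRing R]

def tridiag (a b c : ℕ → R) (n : ℕ) : Matrix (Fin n) (Fin n) R :=
  of fun i j =>
    if (i : ℕ) = j then a i else if (i : ℕ) + 1 = j then b i else if (j : ℕ) + 1 = i then c j
    else 0

theorem tridiag_submatrix_castSucc (a b c : ℕ → R) (n : ℕ) :
    (tridiag a b c (n + 1)).submatrix Fin.castSucc Fin.castSucc = tridiag a b c n := by
  ext i j
  simp [tridiag]

theorem det_tridiag_succ_succ (a b c : ℕ → R) (n : ℕ) :
    (tridiag a b c (n + 2)).det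
      = a (n + 1) * (tridiag a b c (n + 1)).det - b n * c n * (tridiag a b c n).det := by
  set T := tridiag a b c (n + 2)
  have hfar (i : Fin n) :
      T (Fin.last _) i.castSucc.castSucc = 0 ∧ T i.castSucc.castSucc (Fin.last _) = 0 := by
    have := i.isLt
    simp only [T, tridiag, of_apply, Fin.val_last, Fin.val_castSucc]
    constructor <;> split_ifs <;> first | rfl | omega
  have hb : T (Fin.last n).castSucc (Fin.last _) = b n := by simp [T, tridiag]
  have hcorner : T.submatrix (fun i => i.castSucc.castSucc) (fun i => i.castSucc.castSucc)
      = tridiag a b c n := by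
    ext i j
    simp [T, tridiag]
  -- the minor of the entry `c n` in the last row has `b n` alone in its last column
  have hminor : (T.submatrix Fin.castSucc (Fin.last n).castSucc.succAbove).det
      = b n * (tridiag a b c n).det := by
    rw [det_succ_column _ (Fin.last _), Fin.sum_univ_castSucc]
    simp only [submatrix_apply, submatrix_submatrix, Function.comp_def, Fin.succAbove_last,
      Fin.succAbove_castSucc_self, Fin.succ_last, (hfar _).2, mul_zero, zero_mul, sum_const_zero,
      zero_add, Fin.succAbove_castSucc_of_lt _ _ (Fin.castSucc_lt_last _)]
    simp [hcorner, hb]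
  rw [det_succ_row _ (Fin.last _), Fin.sum_univ_castSucc, Fin.sum_univ_castSucc]
  simp only [Fin.succAbove_last, hminor, T, tridiag_submatrix_castSucc, (hfar _).1, mul_zero,
    zero_mul, sum_const_zero, zero_add]
  simp [tridiag, show n + 1 + 1 ≠ n by omega]
  ring

theorem det_tridiag_eq_sum (x y b c : ℕ → R) (hbc : ∀ k, b k * c k = x (k + 1) * y k) (n : ℕ) :
    (tridiag (fun k => x k + y k) b c n).det
      = ∑ j ∈ range (n + 1), (∏ k ∈ range j, x k) * ∏ k ∈ Ico j n, y k := by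
  induction n using Nat.twoStepInduction with
  | zero => simp
  | one => simp [tridiag, sum_range_succ, add_comm]
  | more n ih₀ ih₁ =>
    rw [det_tridiag_succ_succ, ih₀, ih₁, hbc, sum_prod_range_mul_prod_Ico_succ x y (n + 1),
      sum_prod_range_mul_prod_Ico_succ x y n, prod_range_succ x (n + 1)]
    ring

def upperBidiag (p q : ℕ → R) (n : ℕ) : Matrix (Fin n) (Fin (n + 1)) R :=
  of fun k j => if (j : ℕ) = k then p k else if (j : ℕ) = k + 1 then q k else 0

def lowerBidiag (r s : ℕ → R) (n : ℕ) : Matrix (Fin (n + 1)) (Fin n) R :=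
  of fun i t => if (i : ℕ) = t then r t else if (i : ℕ) = t + 1 then s t else 0

theorem neg_lowerBidiag (r s : ℕ → R) (n : ℕ) :
    -lowerBidiag r s n = lowerBidiag (-r) (-s) n := by
  ext i t
  simp only [lowerBidiag, neg_apply, of_apply, Pi.neg_apply]
  split_ifs <;> simp

theorem upperBidiag_mul_lowerBidiag (p q r s : ℕ → R) (n : ℕ) :
    upperBidiag p q n * lowerBidiag r s n
      = tridiag (fun k => p k * r k + q k * s k) (fun k => q k * r (k + 1))
          (fun k => p (k + 1) * s k) n := by
  ext ⟨k, hk⟩ ⟨t, ht⟩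
  rw [mul_apply,
    Fintype.sum_eq_add (Fin.castSucc ⟨k, hk⟩) (Fin.succ ⟨k, hk⟩) (by simp [Fin.ext_iff])]
  · simp only [upperBidiag, lowerBidiag, tridiag, of_apply, Fin.val_castSucc, Fin.val_succ]
    split_ifs <;> (try omega) <;> subst_vars <;> simp
  · rintro j ⟨hk, hk'⟩
    simp only [ne_eq, Fin.ext_iff, Fin.val_castSucc, Fin.val_succ] at hk hk'
    simp [upperBidiag, hk, hk']

theorem det_upperBidiag_mul_lowerBidiag (p q r s : ℕ → R) (n : ℕ) :
    (upperBidiag p q n * lowerBidiag r s n).det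
      = ∑ j ∈ range (n + 1), (∏ k ∈ range j, p k * r k) * ∏ k ∈ Ico j n, q k * s k := by
  rw [upperBidiag_mul_lowerBidiag]
  exact det_tridiag_eq_sum (fun k => p k * r k) (fun k => q k * s k) _ _ (fun k => by ring) n

end Matrix

open Matrix

def spKernelBlockEquiv (Ω : ℕ) : Fin (Ω + 1) ⊕ Fin Ω ≃ Fin (2 * Ω + 1) :=
  finSumFinEquiv.trans (finCongr (by omega))

theorem spKernelMatrix_submatrix_eq_fromBlocks (Ω : ℕ) :
    (spKernelMatrix Ω).submatrix (spKernelBlockEquiv Ω) (spKernelBlockEquiv Ω)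
      = fromBlocks 1
          (lowerBidiag (fun t => -((t : ℤ) + 1)) (fun t => 4 * (Ω : ℤ) + 2 - 4 * ((t : ℤ) + 1)) Ω)
          (upperBidiag (fun k => 4 * (Ω : ℤ) - 4 * k) (fun k => -((k : ℤ) + 1)) Ω) 0 := by
  ext (⟨i, hi⟩ | ⟨i, hi⟩) (⟨j, hj⟩ | ⟨j, hj⟩)
  all_goals simp [spKernelMatrix, spKernelBlockEquiv, lowerBidiag, upperBidiag, one_apply]
  all_goals split_ifs <;> omega

/-- **Determinant formula for the `sp(2,ℝ)` kernel matrix.**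
With `φ(i) = 4Ω+2−4i` and `ψ(i) = 4Ω−4i`,
`det M = Ω! · ∑_{j=1}^{Ω+1} (∏_{i=0}^{j−2} ψ(i)) · (∏_{i=j}^{Ω} φ(i))`. -/
theorem det_spKernelMatrix (Ω : ℕ) :
    (spKernelMatrix Ω).det
      = (Nat.factorial Ω : ℤ) *
          ∑ j ∈ Finset.Icc 1 (Ω + 1),
            (∏ i ∈ Finset.range (j - 1), (4 * (Ω : ℤ) - 4 * (i : ℤ))) *
            (∏ i ∈ Finset.Icc j Ω, (4 * (Ω : ℤ) + 2 - 4 * (i : ℤ))) := by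
  rw [← det_submatrix_equiv_self (spKernelBlockEquiv Ω),
    spKernelMatrix_submatrix_eq_fromBlocks, det_fromBlocks_one₁₁, zero_sub, ← Matrix.mul_neg,
    neg_lowerBidiag, det_upperBidiag_mul_lowerBidiag, sum_Icc_prod_range_mul_prod_Icc, mul_sum]
  refine sum_congr rfl fun j hj => ?_
  have hfact :
      (Ω.factorial : ℤ) = (∏ k ∈ range j, ((k : ℤ) + 1)) * ∏ k ∈ Ico j Ω, ((k : ℤ) + 1) := by
    rw [prod_range_mul_prod_Ico _ (mem_range_succ_iff.mp hj), ← prod_range_add_one_eq_factorial]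
    push_cast
    rfl
  simp only [Pi.neg_apply, neg_neg, neg_mul_neg, prod_mul_distrib, hfact]
  push_cast
  ring
end
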